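/- arXiv:1909.00770 — 12 statements merged into one kernel-verified Lean document; each statement's English description precedes it below -/
import Mathlib

section
/- For every real number c with |c| > 1, there exists a unique ω > 0 such that −c²ω² + 2 + 2cos(ω) = 0. Moreover, this unique positive zero ω satisfies √2/|c| < ω < π/2. -/
/-!
For `c² ≥ 1` the symbol `B̃_c` is strictly decreasing on `[0, ∞)`, since its derivative
`-2(c²k + sin k)` is negative there (`|sin k| < k`). It equals `4` at `0` and is negative at `π/2`,
so it has exactly one positive zero `ω`, and `ω < π/2`. There `cos ω > 0`, hence
`c²ω² = 2 + 2 cos ω > 2`, which is the lower bound `ω > √2/|c|`.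
-/

open Set Real

namespace FPUT

noncomputable def symbol (c k : ℝ) : ℝ := -c ^ 2 * k ^ 2 + 2 + 2 * cos k

variable {c : ℝ}

theorem hasDerivAt_symbol (c k : ℝ) :
    HasDerivAt (symbol c) (-2 * (c ^ 2 * k + sin k)) k := by
  have hsq : HasDerivAt (fun k : ℝ => k ^ 2) (2 * k) k := by simpa using hasDerivAt_pow 2 k
  exact (((hsq.const_mul (-c ^ 2)).add_const 2).add ((hasDerivAt_cos k).const_mul 2)).congr_deriv
    (by ring)

theorem continuous_symbol (c : ℝ) : Continuous (symbol c) := by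
  unfold symbol
  fun_prop

theorem symbol_zero (c : ℝ) : symbol c 0 = 4 := by
  norm_num [symbol]

theorem symbol_pi_div_two_neg (hc : 1 ≤ c ^ 2) : symbol c (π / 2) < 0 := by
  have hπ := pi_gt_three
  simp only [symbol, cos_pi_div_two]
  nlinarith

theorem strictAntiOn_symbol (hc : 1 ≤ c ^ 2) : StrictAntiOn (symbol c) (Ici 0) := by
  refine strictAntiOn_of_hasDerivWithinAt_neg (convex_Ici 0) (continuous_symbol c).continuousOn
    (fun k _ => (hasDerivAt_symbol c k).hasDerivWithinAt) fun k hk => ?_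
  rw [interior_Ici, mem_Ioi] at hk
  have hsin : -k < sin k := by
    have := abs_sin_lt_abs hk.ne'
    rw [abs_of_pos hk] at this
    linarith [neg_abs_le (sin k)]
  nlinarith

theorem exists_symbol_eq_zero (hc : 1 ≤ c ^ 2) : ∃ ω ∈ Ioo 0 (π / 2), symbol c ω = 0 := by
  have hπ := pi_pos
  obtain ⟨ω, ⟨hω₀, hωπ⟩, hω⟩ := intermediate_value_Icc' (by positivity : (0 : ℝ) ≤ π / 2)
    (continuous_symbol c).continuousOn
    ⟨(symbol_pi_div_two_neg hc).le, by rw [symbol_zero]; norm_num⟩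
  refine ⟨ω, ⟨hω₀.lt_of_ne ?_, hωπ.lt_of_ne ?_⟩, hω⟩
  · rintro rfl
    norm_num [symbol_zero] at hω
  · rintro rfl
    exact (symbol_pi_div_two_neg hc).ne hω

theorem lt_pi_div_two_of_symbol_eq_zero (hc : 1 ≤ c ^ 2) {ω : ℝ} (hω₀ : 0 ≤ ω)
    (hω : symbol c ω = 0) : ω < π / 2 := by
  by_contra! hπω
  have hanti := (strictAntiOn_symbol hc).antitoneOn (mem_Ici.2 (by positivity)) (mem_Ici.2 hω₀) hπω
  linarith [symbol_pi_div_two_neg hc]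

theorem sqrt_two_div_abs_lt_of_symbol_eq_zero {ω : ℝ} (hω₀ : 0 < ω) (hωπ : ω < π / 2)
    (hω : symbol c ω = 0) : √2 / |c| < ω := by
  have hcos : 0 < cos ω := cos_pos_of_mem_Ioo ⟨by linarith [pi_pos], hωπ⟩
  have hsq : 2 < (ω * |c|) ^ 2 := by
    rw [mul_pow, sq_abs]
    unfold symbol at hω
    nlinarith
  have hc : 0 < |c| := by
    by_contra! h
    rw [abs_nonpos_iff.1 h] at hsq
    norm_num at hsq
  rw [div_lt_iff₀ hc, sqrt_lt' (by positivity)]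
  exact hsq

end FPUT

/-- For every real `c` with `|c| > 1`, there is a unique `ω > 0` with
`-c²ω² + 2 + 2cos ω = 0`, and this unique positive zero satisfies
`√2/|c| < ω < π/2`. -/
theorem unique_positive_zero_of_symbol (c : ℝ) (hc : 1 < |c|) :
    (∃! ω : ℝ, 0 < ω ∧ -c ^ 2 * ω ^ 2 + 2 + 2 * Real.cos ω = 0) ∧
    (∀ ω : ℝ, 0 < ω → -c ^ 2 * ω ^ 2 + 2 + 2 * Real.cos ω = 0 →
      Real.sqrt 2 / |c| < ω ∧ ω < Real.pi / 2) := by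
  have hc2 : 1 ≤ c ^ 2 := by nlinarith [sq_abs c]
  obtain ⟨ω, hωmem, hω⟩ := FPUT.exists_symbol_eq_zero hc2
  refine ⟨⟨ω, ⟨hωmem.1, hω⟩, fun ω' ⟨hω'₀, hω'⟩ => ?_⟩, fun ω' hω'₀ hω' => ?_⟩
  · exact (FPUT.strictAntiOn_symbol hc2).injOn hω'₀.le hωmem.1.le (hω'.trans hω.symm)
  · have hω'π := FPUT.lt_pi_div_two_of_symbol_eq_zero hc2 hω'₀.le hω'
    exact ⟨FPUT.sqrt_two_div_abs_lt_of_symbol_eq_zero hω'₀ hω'π hω', hω'π⟩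
end

section
/- There exists δ > 0 such that for every real number c with 1 < |c| ≤ √2, the derivative of B̃_c at its unique positive zero ω_c satisfies |B̃_c′(ω_c)| ≥ δ. That is, the infimum over 1 < |c| ≤ √2 of |B̃_c′(ω_c)| is strictly positive. -/
/-!
At a positive zero `ω` of `B̃_c` we have `B̃_c′(ω) = -2c²ω - 2 sin ω`. Since `c² > 1`, the zero
equation `c²ω² = 2 + 2 cos ω ≤ 4` forces `ω < 2 < π`, so `sin ω > 0`, and `cos ω > cos (2π/3) = -1/2`
gives `c²ω² > 1`. Then `(c²ω)² = c² · c²ω² > 1`, hence `|B̃_c′(ω)| ≥ 2c²ω > 2`.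
-/

open Real

noncomputable def symbol (c k : ℝ) : ℝ := -c ^ 2 * k ^ 2 + 2 + 2 * cos k

theorem hasDerivAt_symbol (c k : ℝ) :
    HasDerivAt (symbol c) (-2 * c ^ 2 * k - 2 * sin k) k := by
  have h := (((hasDerivAt_pow 2 k).const_mul (-c ^ 2)).add_const 2).add
    ((hasDerivAt_cos k).const_mul 2)
  exact h.congr_deriv (by ring)

theorem Real.neg_one_half_lt_cos {x : ℝ} (hx₀ : 0 ≤ x) (hx : x < 2 * π / 3) :
    -(1 / 2) < cos x := by
  have h : cos (2 * π / 3) = -(1 / 2) := by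
    rw [show 2 * π / 3 = π - π / 3 by ring, cos_pi_sub, cos_pi_div_three]
  rw [← h]
  exact cos_lt_cos_of_nonneg_of_le_pi hx₀ (by linarith [pi_pos]) hx

section Zero

variable {c ω : ℝ} (hc : 1 < c ^ 2) (hω : 0 < ω) (h : symbol c ω = 0)
include hc hω h

theorem lt_two_of_symbol_eq_zero : ω < 2 := by
  unfold symbol at h
  nlinarith [cos_le_one ω, mul_lt_mul_of_pos_right hc (pow_pos hω 2)]

theorem one_lt_sq_mul_of_symbol_eq_zero : 1 < c ^ 2 * ω := by
  have hω₂ : ω < 2 * π / 3 := by linarith [lt_two_of_symbol_eq_zero hc hω h, pi_gt_three]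
  have hcos := neg_one_half_lt_cos hω.le hω₂
  unfold symbol at h
  have hsq : 1 < c ^ 2 * ω ^ 2 := by linarith
  have : 1 < (c ^ 2 * ω) ^ 2 := by nlinarith
  nlinarith

theorem two_lt_abs_deriv_symbol_of_eq_zero : 2 < |deriv (symbol c) ω| := by
  have hsin : 0 < sin ω :=
    sin_pos_of_pos_of_lt_pi hω (by linarith [lt_two_of_symbol_eq_zero hc hω h, pi_gt_three])
  rw [(hasDerivAt_symbol c ω).deriv]
  calc (2 : ℝ) < 2 * (c ^ 2 * ω) + 2 * sin ω := by
        linarith [one_lt_sq_mul_of_symbol_eq_zero hc hω h]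
    _ = -(-2 * c ^ 2 * ω - 2 * sin ω) := by ring
    _ ≤ |-2 * c ^ 2 * ω - 2 * sin ω| := neg_le_abs _

end Zero

/-- There is `δ > 0` such that for every `c` with `1 < |c| ≤ √2`, the derivative
of `B̃_c(k) = -c²k² + 2 + 2cos k` at its unique positive zero `ω_c` satisfies
`|B̃_c′(ω_c)| ≥ δ`. -/
theorem deriv_symbol_uniform_lower_bound :
    ∃ δ : ℝ, 0 < δ ∧ ∀ c ω : ℝ, 1 < |c| → |c| ≤ Real.sqrt 2 → 0 < ω →
      -c ^ 2 * ω ^ 2 + 2 + 2 * Real.cos ω = 0 →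
      δ ≤ |deriv (fun k : ℝ => -c ^ 2 * k ^ 2 + 2 + 2 * Real.cos k) ω| :=
  ⟨2, two_pos, fun c _ hc _ hω h =>
    (two_lt_abs_deriv_symbol_of_eq_zero ((one_lt_sq_iff_one_lt_abs c).2 hc) hω h).le⟩
end

section
/- The following three facts hold: (a) for every real k ≠ 0, sin(k)/k > −1/4; (b) for every real q with 0 < |q| ≤ 3, 2q/(e^{−q} − e^{q}) < −1/4; (c) consequently, for every real c with |c| > 1, every real k ≠ 0, and every real q with 0 < |q| ≤ 3, the quantity −2c²kq + (e^{−q} − e^{q})·sin(k) is nonzero. -/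
/-!
On `0 < k ≤ π` the sine is nonnegative, on `π < k ≤ 4` it stays above `-(k - π) > -k/4`, and beyond
`4` it is at least `-1 > -k/4`. On `0 < q ≤ 3`, convexity of `exp` on `[0, 3]` and `exp 3 < 22`
give `sinh q < 4q`. Finally, if the quantity vanished, then
`sin k / k = c² · 2q/(e^{-q} - e^q) < 2q/(e^{-q} - e^q) < -1/4`, since the last ratio is negative.
-/

open Real

lemma neg_div_four_lt_sin {k : ℝ} (hk : 0 < k) : -(k / 4) < sin k := by
  rcases le_or_gt k π with hkπ | hπk
  · linarith [sin_nonneg_of_nonneg_of_le_pi hk.le hkπ]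
  rcases le_or_gt k 4 with hk4 | hk4
  · have h : sin (k - π) < k - π := sin_lt (by linarith)
    rw [sin_sub_pi] at h
    linarith [pi_gt_three]
  · linarith [neg_one_le_sin k]

lemma neg_quarter_lt_sin_div {k : ℝ} (hk : k ≠ 0) : -(1 / 4) < sin k / k := by
  rcases hk.lt_or_gt with hneg | hpos
  · rw [← neg_div_neg_eq (sin k) k, ← sin_neg, lt_div_iff₀ (neg_pos.2 hneg)]
    linarith [neg_div_four_lt_sin (neg_pos.2 hneg)]
  · rw [lt_div_iff₀ hpos]
    linarith [neg_div_four_lt_sin hpos]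

lemma exp_three_lt : exp 3 < 22 := by
  have h : exp 1 ^ 3 < 2.7182818286 ^ 3 := by gcongr; exact exp_one_lt_d9
  rw [← exp_nat_mul] at h
  norm_num at h
  linarith

lemma sinh_lt_four_mul {q : ℝ} (hq : 0 < q) (hq3 : q ≤ 3) : sinh q < 4 * q := by
  have hchord : exp q ≤ (1 - q / 3) * exp 0 + q / 3 * exp 3 := by
    simpa [smul_eq_mul, show q / 3 * 3 = q by ring] using
      convexOn_exp.2 (Set.mem_univ 0) (Set.mem_univ 3) (by linarith : 0 ≤ 1 - q / 3)
        (by positivity : 0 ≤ q / 3) (by ring)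
  rw [exp_zero] at hchord
  rw [sinh_eq]
  nlinarith [add_one_le_exp (-q), exp_three_lt]

lemma quarter_lt_div_sinh {q : ℝ} (hq : q ≠ 0) (hq3 : |q| ≤ 3) : 1 / 4 < q / sinh q := by
  rcases hq.lt_or_gt with hneg | hpos
  · rw [abs_of_neg hneg] at hq3
    have hsinh : 0 < sinh (-q) := sinh_pos_iff.2 (neg_pos.2 hneg)
    rw [← neg_div_neg_eq q (sinh q), ← sinh_neg, lt_div_iff₀ hsinh]
    linarith [sinh_lt_four_mul (neg_pos.2 hneg) hq3]
  · rw [abs_of_pos hpos] at hq3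
    rw [lt_div_iff₀ (sinh_pos_iff.2 hpos)]
    linarith [sinh_lt_four_mul hpos hq3]

lemma exp_neg_sub_exp (x : ℝ) : exp (-x) - exp x = -(2 * sinh x) := by
  rw [sinh_eq]; ring

lemma two_mul_div_exp_neg_sub_exp_lt {q : ℝ} (hq : q ≠ 0) (hq3 : |q| ≤ 3) :
    2 * q / (exp (-q) - exp q) < -(1 / 4) := by
  have h : 2 * q / (exp (-q) - exp q) = -(q / sinh q) := by
    rw [exp_neg_sub_exp]; ring
  linarith [quarter_lt_div_sinh hq hq3]

/-- (a) `sin k / k > -1/4` for real `k ≠ 0`; (b) `2q/(e^{-q} - e^{q}) < -1/4`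
for `0 < |q| ≤ 3`; (c) hence for `|c| > 1`, `k ≠ 0`, and `0 < |q| ≤ 3`, the
quantity `-2c²kq + (e^{-q} - e^{q}) sin k` is nonzero. -/
theorem imaginary_part_of_symbol_nonzero :
    (∀ k : ℝ, k ≠ 0 → Real.sin k / k > -(1 / 4)) ∧
    (∀ q : ℝ, 0 < |q| → |q| ≤ 3 →
      2 * q / (Real.exp (-q) - Real.exp q) < -(1 / 4)) ∧
    (∀ c k q : ℝ, 1 < |c| → k ≠ 0 → 0 < |q| → |q| ≤ 3 →
      -2 * c ^ 2 * k * q + (Real.exp (-q) - Real.exp q) * Real.sin k ≠ 0) := by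
  refine ⟨fun k hk => neg_quarter_lt_sin_div hk,
    fun q hq hq3 => two_mul_div_exp_neg_sub_exp_lt (abs_pos.1 hq) hq3, ?_⟩
  intro c k q hc hk hq hq3 hzero
  have hratio := two_mul_div_exp_neg_sub_exp_lt (abs_pos.1 hq) hq3
  have hs : exp (-q) - exp q ≠ 0 := by
    rw [exp_neg_sub_exp, neg_ne_zero]
    exact mul_ne_zero two_ne_zero (sinh_ne_zero.2 (abs_pos.1 hq))
  have hsin : sin k / k = c ^ 2 * (2 * q / (exp (-q) - exp q)) := by
    field_simp
    linarith
  have hc2 : 1 < c ^ 2 := one_lt_sq_iff_one_lt_abs c |>.2 hc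
  have hscale : c ^ 2 * (2 * q / (exp (-q) - exp q)) < 2 * q / (exp (-q) - exp q) := by
    nlinarith
  linarith [neg_quarter_lt_sin_div hk]
end

section
/- For every real number c with |c| > 1 and every complex number z with 0 < |Im z| ≤ 3, one has B̃_c(z) = −c²z² + 2 + 2cos(z) ≠ 0, where cos denotes the complex cosine. In other words, B̃_c has no zeros in the closed strip {|Im z| ≤ 3} off the real axis. -/
/-!
Write `z = x + iy`. The imaginary part of `B̃_c(z) = 0` reads `c² x y = -sin x sinh y`. For `x = 0`
the real part `c² y² + 2 + 2 cosh y` is positive. Otherwise, since `y sinh y > 0`, the imaginary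
part forces `x sin x < 0`, hence `|x| > π`, and then `(π + 1) |sin x| ≤ |x|`. Convexity of `sinh`
gives `sinh |y| ≤ |y| sinh 3 / 3` for `|y| ≤ 3`, and `sinh 3 < 3 (π + 1)`, so
`|sin x sinh y| < |x y|`, contradicting `c² > 1`.
-/

open Real

/-- The symbol `B̃_c`. -/
noncomputable def advanceDelaySymbol (c : ℝ) (z : ℂ) : ℂ :=
  -(c : ℂ) ^ 2 * z ^ 2 + 2 + 2 * Complex.cos z

lemma Complex.cos_re (z : ℂ) : (Complex.cos z).re = Real.cos z.re * Real.cosh z.im := by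
  simp [Complex.cos_eq z, Complex.cos_ofReal_re, Complex.cosh_ofReal_re, Complex.sin_ofReal_im,
    Complex.sinh_ofReal_im]

lemma Complex.cos_im (z : ℂ) : (Complex.cos z).im = -(Real.sin z.re * Real.sinh z.im) := by
  simp [Complex.cos_eq z, Complex.cos_ofReal_im, Complex.cosh_ofReal_im, Complex.sin_ofReal_re,
    Complex.sinh_ofReal_re]

lemma advanceDelaySymbol_re (c : ℝ) (z : ℂ) :
    (advanceDelaySymbol c z).re =
      -c ^ 2 * (z.re ^ 2 - z.im ^ 2) + 2 + 2 * (cos z.re * cosh z.im) := by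
  simp [advanceDelaySymbol, Complex.cos_re, pow_two]

lemma advanceDelaySymbol_im (c : ℝ) (z : ℂ) :
    (advanceDelaySymbol c z).im = -2 * (c ^ 2 * (z.re * z.im) + sin z.re * sinh z.im) := by
  simp only [advanceDelaySymbol, pow_two, neg_mul, Complex.add_im, Complex.neg_im, Complex.mul_im,
    Complex.mul_re, Complex.ofReal_re, Complex.ofReal_im, mul_zero, sub_zero, zero_mul, add_zero,
    Complex.im_ofNat, Complex.re_ofNat, Complex.cos_im, mul_neg]
  ring

namespace Real

lemma convexOn_sinh : ConvexOn ℝ (Set.Ici 0) sinh := by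
  refine MonotoneOn.convexOn_of_deriv (convex_Ici 0) continuous_sinh.continuousOn
    differentiable_sinh.differentiableOn ?_
  rw [deriv_sinh, interior_Ici]
  intro s hs t ht hst
  rwa [cosh_le_cosh, abs_of_pos hs, abs_of_pos ht]

lemma mul_sinh_le_mul_sinh {t a : ℝ} (ht : 0 ≤ t) (hta : t ≤ a) : a * sinh t ≤ t * sinh a := by
  rcases ht.eq_or_lt with rfl | ht
  · simp
  have hslope := convexOn_sinh.slope_mono (Set.self_mem_Ici (a := (0 : ℝ)))
    ⟨Set.mem_Ici.2 ht.le, ht.ne'⟩ ⟨Set.mem_Ici.2 (ht.trans_le hta).le, (ht.trans_le hta).ne'⟩ hta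
  simp only [slope_def_field, sinh_zero, sub_zero] at hslope
  rw [div_le_div_iff₀ ht (ht.trans_le hta)] at hslope
  linarith

lemma mul_sinh_pos {y : ℝ} (hy : y ≠ 0) : 0 < y * sinh y := by
  rcases hy.lt_or_gt with hy | hy
  · exact mul_pos_of_neg_of_neg hy (sinh_neg_iff.2 hy)
  · exact mul_pos hy (sinh_pos_iff.2 hy)

lemma pi_lt_abs_of_mul_sin_neg {x : ℝ} (h : x * sin x < 0) : π < |x| := by
  by_contra! hx
  rcases abs_le.1 hx with ⟨hl, hr⟩
  rcases le_total 0 x with h0 | h0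
  · exact h.not_ge (mul_nonneg h0 (sin_nonneg_of_nonneg_of_le_pi h0 hr))
  · exact h.not_ge (mul_nonneg_of_nonpos_of_nonpos h0 (sin_nonpos_of_nonpos_of_neg_pi_le h0 hl))

lemma pi_add_one_mul_abs_sin_le {x : ℝ} (h : π ≤ |x|) : (π + 1) * |sin x| ≤ |x| := by
  have hsin : |sin x| ≤ |x| - π :=
    calc |sin x| = |sin (|x| - π)| := by
          rw [sin_sub_pi, abs_neg]
          rcases abs_choice x with hx | hx <;> simp [hx]
      _ ≤ |(|x| - π)| := abs_sin_le_abs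
      _ = |x| - π := abs_of_nonneg (sub_nonneg.2 h)
  nlinarith [abs_sin_le_one x, pi_pos]

lemma sinh_three_lt : sinh 3 < 3 * (π + 1) := by
  have hexp : exp 3 < 24 := by
    calc exp 3 = exp 1 ^ 3 := by rw [← exp_nat_mul]; norm_num
      _ < 2.7182818286 ^ 3 := by gcongr; exact exp_one_lt_d9
      _ < 24 := by norm_num
  rw [sinh_eq]
  linarith [exp_pos (-3), pi_gt_three]

end Real

lemma abs_sin_mul_sinh_lt {x y : ℝ} (hx : x * sin x < 0) (hy0 : y ≠ 0) (hy : |y| ≤ 3) :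
    |sin x * sinh y| < |x * y| := by
  have hsinh : 3 * sinh |y| ≤ |y| * sinh 3 := mul_sinh_le_mul_sinh (abs_nonneg y) hy
  have hsin : (π + 1) * |sin x| ≤ |x| := pi_add_one_mul_abs_sin_le (pi_lt_abs_of_mul_sin_neg hx).le
  have hxpos : 0 < |x| := abs_pos.2 (by rintro rfl; simp at hx)
  have hypos : 0 < |y| := abs_pos.2 hy0
  rw [abs_mul, abs_mul, abs_sinh]
  calc |sin x| * sinh |y| ≤ |x| / (π + 1) * (|y| * sinh 3 / 3) := by
        gcongr
        · rw [le_div_iff₀ (by positivity)]; linarith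
        · rw [le_div_iff₀ (by norm_num)]; linarith
    _ < |x| * |y| := by
        rw [div_mul_div_comm, div_lt_iff₀ (by positivity)]
        have := sinh_three_lt
        nlinarith [mul_pos hxpos hypos]

/-- For `|c| > 1` and any complex `z` with `0 < |Im z| ≤ 3`, one has
`B̃_c(z) = -c²z² + 2 + 2cos z ≠ 0`: the symbol has no zeros in the closed strip
`{|Im z| ≤ 3}` off the real axis. -/
theorem symbol_nonzero_off_real_axis (c : ℝ) (hc : 1 < |c|) (z : ℂ)
    (h0 : 0 < |z.im|) (h3 : |z.im| ≤ 3) :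
    -(c : ℂ) ^ 2 * z ^ 2 + 2 + 2 * Complex.cos z ≠ 0 := by
  change advanceDelaySymbol c z ≠ 0
  have hc2 : 1 < c ^ 2 := by rwa [← sq_abs, one_lt_sq_iff₀ (abs_nonneg c)]
  have hy : z.im ≠ 0 := abs_pos.1 h0
  intro h
  by_cases hx : z.re = 0
  · have hre := congrArg Complex.re h
    rw [advanceDelaySymbol_re, hx, cos_zero, Complex.zero_re] at hre
    nlinarith [one_le_cosh z.im, sq_nonneg z.im]
  have him : c ^ 2 * (z.re * z.im) = -(sin z.re * sinh z.im) := by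
    have := congrArg Complex.im h
    rw [advanceDelaySymbol_im, Complex.zero_im] at this
    linarith
  have hxy : z.re * z.im ≠ 0 := mul_ne_zero hx hy
  have hxsin : z.re * sin z.re < 0 := by
    have hprod : (z.re * sin z.re) * (z.im * sinh z.im) = -(c ^ 2 * (z.re * z.im) ^ 2) := by
      linear_combination (z.re * z.im) * him
    have hneg : (z.re * sin z.re) * (z.im * sinh z.im) < 0 := by
      rw [hprod]
      exact neg_neg_of_pos (by positivity)
    exact neg_of_mul_neg_left hneg (mul_sinh_pos hy).le
  have hlt := abs_sin_mul_sinh_lt hxsin hy h3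
  rw [← abs_neg, ← him, abs_mul, abs_of_pos (by positivity : (0 : ℝ) < c ^ 2)] at hlt
  nlinarith [abs_pos.2 hxy]
end

section
/- Let c be a real number with |c| > 1 and let ω_c be the unique positive real zero of B̃_c. Then there exists a function g, holomorphic on the open strip S = {z ∈ ℂ : |Im z| < 3}, such that g(z) ≠ 0 for every z ∈ S and B̃_c(z) = (z − ω_c)(z + ω_c)·g(z) for every z ∈ S. In particular, 1/B̃_c is meromorphic on S, and its only poles there are z = ω_c and z = −ω_c, each of which is simple. -/
/-!
With `a = |c|`, the identity `2 + 2 cos z = 4 cos² (z / 2)` factors the symbol as `f z * f (-z)`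
with `f z = 2 cos (z / 2) - a z`, and the zero condition at `ω` says `cos (ω / 2) = a (ω / 2)`.
It therefore suffices that `cos w = a w` has no solution in `|Im w| < 3 / 2` other than `ω / 2`:
then `ω` is the only zero of `f` in the strip, it is simple, the difference quotient
`dslope f ω` is holomorphic and zero-free there, and `g z = -dslope f ω z * dslope f ω (-z)`.

Real solutions are unique because `cos` is `1`-Lipschitz and `a > 1`. A solution `u + s i` with
`0 < s < 3 / 2` satisfies `cos u cosh s = a u` and `sin u sinh s = -a s`; the signs force
`β = u + π ∈ (0, π / 2)`. Then `sin β ≥ s / sinh s ≥ 7 / 10`, so `β (π - β) > 5 / 3`, whereas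
`tan β > β` together with the two equations gives `β (π - β) < s coth s ≤ 5 / 3`.
-/

open Real Set

namespace Real

lemma mul_sinh_le_mul_sinh_s5 {b s : ℝ} (hs : 0 ≤ s) (hsb : s ≤ b) : b * sinh s ≤ s * sinh b := by
  let ψ : ℝ → ℝ := fun t ↦ t * sinh b - b * sinh t
  have hb : 0 ≤ b := hs.trans hsb
  have hψ : ConcaveOn ℝ (Icc 0 b) ψ := by
    refine concaveOn_of_hasDerivWithinAt2_nonpos (convex_Icc 0 b) (by fun_prop)
      (f' := fun t ↦ sinh b - b * cosh t) (f'' := fun t ↦ -(b * sinh t)) ?_ ?_ ?_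
    · intro t _
      exact (((hasDerivAt_id t).mul_const _).sub ((hasDerivAt_sinh t).const_mul b)).hasDerivWithinAt
        |>.congr_deriv (by simp)
    · intro t _
      exact ((hasDerivAt_const t _).sub ((hasDerivAt_cosh t).const_mul b)).hasDerivWithinAt
        |>.congr_deriv (by simp)
    · intro t ht
      rw [interior_Icc] at ht
      have := sinh_pos_iff.2 ht.1
      simp only [neg_nonpos]
      positivity
  have hends : (0 : ℝ) ≤ min (ψ 0) (ψ b) := le_min (by simp [ψ]) (by simp [ψ])
  have := hends.trans (hψ.min_le_of_mem_Icc (left_mem_Icc.2 hb) (right_mem_Icc.2 hb) ⟨hs, hsb⟩)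
  simp only [ψ] at this
  linarith

lemma mul_cosh_le_mul_sinh {K b s : ℝ} (hK : K ≤ 2) (hb : b * cosh b ≤ K * sinh b)
    (hs : 0 ≤ s) (hsb : s ≤ b) : s * cosh s ≤ K * sinh s := by
  let φ : ℝ → ℝ := fun t ↦ K * sinh t - t * cosh t
  have hφ : ConcaveOn ℝ (Icc 0 b) φ := by
    refine concaveOn_of_hasDerivWithinAt2_nonpos (convex_Icc 0 b) (by fun_prop)
      (f' := fun t ↦ (K - 1) * cosh t - t * sinh t)
      (f'' := fun t ↦ (K - 2) * sinh t - t * cosh t) ?_ ?_ ?_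
    · intro t _
      exact (((hasDerivAt_sinh t).const_mul K).sub ((hasDerivAt_id t).mul (hasDerivAt_cosh t)))
        |>.hasDerivWithinAt |>.congr_deriv (by simp; ring)
    · intro t _
      exact (((hasDerivAt_cosh t).const_mul _).sub ((hasDerivAt_id t).mul (hasDerivAt_sinh t)))
        |>.hasDerivWithinAt |>.congr_deriv (by simp; ring)
    · intro t ht
      rw [interior_Icc] at ht
      have := sinh_pos_iff.2 ht.1
      have := mul_pos ht.1 (cosh_pos t)
      nlinarith
  have hb0 : 0 ≤ b := hs.trans hsb
  have hends : (0 : ℝ) ≤ min (φ 0) (φ b) := le_min (by simp [φ]) (by simp only [φ]; linarith)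
  have := hends.trans (hφ.min_le_of_mem_Icc (left_mem_Icc.2 hb0) (right_mem_Icc.2 hb0) ⟨hs, hsb⟩)
  simp only [φ] at this
  linarith

lemma exp_three_halves_sq : exp (3 / 2) ^ 2 = exp 1 ^ 3 := by
  rw [← exp_nat_mul, ← exp_nat_mul]; norm_num

lemma sinh_three_halves_le : sinh (3 / 2) ≤ 15 / 7 := by
  have hE : exp (3 / 2) ≤ 9 / 2 := by
    have : exp 1 ^ 3 < 2.72 ^ 3 := pow_lt_pow_left₀ (exp_one_lt_d9.trans (by norm_num))
      (exp_pos 1).le (by norm_num)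
    nlinarith [exp_three_halves_sq, exp_pos (3 / 2)]
  have hEpos := exp_pos (3 / 2)
  rw [sinh_eq, exp_neg]
  have : exp (3 / 2) * (exp (3 / 2))⁻¹ = 1 := mul_inv_cancel₀ hEpos.ne'
  nlinarith

lemma three_halves_mul_cosh_le : 3 / 2 * cosh (3 / 2) ≤ 5 / 3 * sinh (3 / 2) := by
  have hE : 19 ≤ exp (3 / 2) ^ 2 := by
    have : 2.7 ^ 3 < exp 1 ^ 3 := pow_lt_pow_left₀ (exp_one_gt_d9.trans' (by norm_num))
      (by norm_num) (by norm_num)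
    nlinarith [exp_three_halves_sq]
  have hEpos := exp_pos (3 / 2)
  rw [sinh_eq, cosh_eq, exp_neg]
  have : exp (3 / 2) * (exp (3 / 2))⁻¹ = 1 := mul_inv_cancel₀ hEpos.ne'
  nlinarith [inv_pos.2 hEpos]

lemma sin_mul_sinh_ne_of_cos_mul_cosh_eq {a β s : ℝ} (ha : 1 ≤ a) (hβ0 : 0 < β) (hβ : β < π / 2)
    (hs0 : 0 < s) (hs : s < 3 / 2) (hcos : cos β * cosh s = a * (π - β)) :
    sin β * sinh s ≠ a * s := by
  intro hsin
  have hsinh_pos : 0 < sinh s := sinh_pos_iff.2 hs0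
  have hsinβ : 0 < sin β := sin_pos_of_pos_of_lt_pi hβ0 (by linarith [pi_pos])
  have hcosβ : 0 < cos β := cos_pos_of_mem_Ioo ⟨by linarith [pi_pos], hβ⟩
  have hsinh_le : sinh s ≤ 10 / 7 * s := by
    nlinarith [mul_sinh_le_mul_sinh_s5 hs0.le hs.le, sinh_three_halves_le]
  have hscoth : s * cosh s ≤ 5 / 3 * sinh s :=
    mul_cosh_le_mul_sinh (by norm_num) three_halves_mul_cosh_le hs0.le hs.le
  have hβ_lb : 7 / 10 < β := by
    have : 7 / 10 ≤ sin β := by nlinarith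
    linarith [sin_lt hβ0]
  have hsin_le : sin β * (π - β) ≤ 5 / 3 * cos β := by
    have hpos : 0 < a * sinh s := by positivity
    refine le_of_mul_le_mul_right ?_ hpos
    calc sin β * (π - β) * (a * sinh s) = a * cos β * (s * cosh s) := by
          linear_combination (a * (π - β)) * hsin - a * s * hcos
      _ ≤ a * cos β * (5 / 3 * sinh s) := by gcongr
      _ = 5 / 3 * cos β * (a * sinh s) := by ring
  have htan : β * cos β < sin β := by
    have := lt_tan hβ0 hβ
    rwa [tan_eq_sin_div_cos, lt_div_iff₀ hcosβ] at this
  have hprod : β * (π - β) < 5 / 3 := by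
    refine lt_of_mul_lt_mul_right ?_ hcosβ.le
    nlinarith
  nlinarith [pi_gt_d2]

lemma cos_mul_cosh_ne_of_sin_mul_sinh_eq {a u s : ℝ} (ha : 1 ≤ a) (hs0 : 0 < s) (hs : s < 3 / 2)
    (hsin : sin u * sinh s = -(a * s)) : cos u * cosh s ≠ a * u := by
  intro hcos
  have hcosh_pos : 0 < cosh s := cosh_pos s
  have hsinu : sin u < 0 :=
    neg_of_mul_neg_left (by nlinarith) (sinh_pos_iff.2 hs0).le
  have hu_abs : |u| < π := by
    have hcosh : cosh s ≤ cosh (3 / 2) :=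
      cosh_le_cosh.2 (by rw [abs_of_pos hs0, abs_of_pos (by norm_num)]; exact hs.le)
    have : a * |u| ≤ cosh s := by
      rw [← abs_of_nonneg (by linarith : 0 ≤ a), ← abs_mul, ← hcos, abs_mul, abs_of_pos hcosh_pos]
      nlinarith [abs_cos_le_one u]
    nlinarith [sinh_three_halves_le, three_halves_mul_cosh_le, pi_gt_three, abs_nonneg u]
  have hu_neg : u < 0 := by
    by_contra! hu
    exact hsinu.not_ge (sin_nonneg_of_nonneg_of_le_pi hu (le_of_abs_le hu_abs.le))
  have hcosu : cos u < 0 := by nlinarith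
  have hu_lt : u < -(π / 2) := by
    by_contra! hu
    exact hcosu.not_ge (cos_nonneg_of_neg_pi_div_two_le_of_le hu (by linarith [pi_pos]))
  refine sin_mul_sinh_ne_of_cos_mul_cosh_eq (β := u + π) ha (by linarith [neg_abs_le u])
    (by linarith) hs0 hs ?_ ?_
  · rw [cos_add_pi]; linarith
  · rw [sin_add_pi]; linarith

lemma eq_of_cos_eq_mul {a x y : ℝ} (ha : 1 < a) (hx : cos x = a * x) (hy : cos y = a * y) :
    x = y := by
  have hlip : a * |x - y| ≤ |x - y| := by
    calc a * |x - y| = |cos x - cos y| := by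
          rw [hx, hy, ← mul_sub, abs_mul, abs_of_pos (by linarith : 0 < a)]
      _ ≤ |x - y| := abs_cos_sub_cos_le x y
  have : |x - y| = 0 := by nlinarith [abs_nonneg (x - y)]
  exact sub_eq_zero.1 (abs_eq_zero.1 this)

end Real

lemma Complex.im_eq_zero_of_cos_eq_mul {a : ℝ} (ha : 1 ≤ a) {w : ℂ} (hw : |w.im| < 3 / 2)
    (h : Complex.cos w = a * w) : w.im = 0 := by
  rw [Complex.cos_eq, ← Complex.ofReal_cos, ← Complex.ofReal_sin, ← Complex.ofReal_cosh,
    ← Complex.ofReal_sinh] at h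
  have hre := congrArg Complex.re h
  have him := congrArg Complex.im h
  simp only [Complex.sub_re, Complex.sub_im, Complex.mul_re, Complex.mul_im, Complex.ofReal_re,
    Complex.ofReal_im, Complex.I_re, Complex.I_im] at hre him
  ring_nf at hre him
  by_contra hv
  rcases lt_or_gt_of_ne hv with hv | hv
  · refine cos_mul_cosh_ne_of_sin_mul_sinh_eq ha (s := -w.im) (by linarith)
      (by linarith [neg_abs_le w.im]) ?_ (by rwa [Real.cosh_neg])
    rw [Real.sinh_neg]; linarith
  · refine cos_mul_cosh_ne_of_sin_mul_sinh_eq ha hv (by linarith [le_abs_self w.im]) ?_ hre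
    linarith

lemma Complex.eq_ofReal_of_cos_eq_mul {a t : ℝ} (ha : 1 < a) (ht : Real.cos t = a * t) {w : ℂ}
    (hw : |w.im| < 3 / 2) (h : Complex.cos w = a * w) : w = t := by
  have him := im_eq_zero_of_cos_eq_mul ha.le hw h
  have hw_re : w = w.re := Complex.ext rfl (by simp [him])
  rw [hw_re, ← Complex.ofReal_cos, ← Complex.ofReal_mul, Complex.ofReal_inj] at h
  rw [hw_re, Real.eq_of_cos_eq_mul ha h ht]

lemma Complex.exists_eq_sub_mul_of_hasDerivAt_ne_zero {f : ℂ → ℂ} {U : Set ℂ} {z₀ f' : ℂ}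
    (hU : IsOpen U) (hf : DifferentiableOn ℂ f U) (hz₀ : z₀ ∈ U)
    (hzero : ∀ z ∈ U, f z = 0 ↔ z = z₀) (hf' : HasDerivAt f f' z₀) (hf'0 : f' ≠ 0) :
    ∃ g : ℂ → ℂ, DifferentiableOn ℂ g U ∧ ∀ z ∈ U, g z ≠ 0 ∧ f z = (z - z₀) * g z := by
  have hfz₀ : f z₀ = 0 := (hzero z₀ hz₀).2 rfl
  refine ⟨dslope f z₀, (Complex.differentiableOn_dslope (hU.mem_nhds hz₀)).2 hf,
    fun z hz ↦ ⟨?_, ?_⟩⟩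
  · rcases eq_or_ne z z₀ with rfl | hne
    · rwa [dslope_same, hf'.deriv]
    · rw [dslope_of_ne f hne, slope_def_field, hfz₀, sub_zero]
      exact div_ne_zero (fun h ↦ hne ((hzero z hz).1 h)) (sub_ne_zero.2 hne)
  · simpa [hfz₀] using (sub_smul_dslope f z₀ z).symm

noncomputable def halfAngleFactor (a : ℝ) (z : ℂ) : ℂ := 2 * Complex.cos (z / 2) - a * z

lemma hasDerivAt_halfAngleFactor (a : ℝ) (z : ℂ) :
    HasDerivAt (halfAngleFactor a) (-Complex.sin (z / 2) - a) z := by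
  have hcos := (Complex.hasDerivAt_cos (z / 2)).comp z ((hasDerivAt_id z).div_const 2)
  exact ((hcos.const_mul 2).sub ((hasDerivAt_id z).const_mul (a : ℂ))).congr_deriv (by simp; ring)

lemma differentiable_halfAngleFactor (a : ℝ) : Differentiable ℂ (halfAngleFactor a) :=
  fun z ↦ (hasDerivAt_halfAngleFactor a z).differentiableAt

lemma neg_sq_mul_sq_add_two_add_two_cos_eq (c : ℝ) (z : ℂ) :
    -(c : ℂ) ^ 2 * z ^ 2 + 2 + 2 * Complex.cos z
      = halfAngleFactor |c| z * halfAngleFactor |c| (-z) := by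
  have hc : ((|c| : ℝ) : ℂ) ^ 2 = (c : ℂ) ^ 2 := by exact_mod_cast sq_abs c
  have hcos := Complex.cos_sq (z / 2)
  rw [show 2 * (z / 2) = z by ring] at hcos
  simp only [halfAngleFactor, neg_div, Complex.cos_neg]
  linear_combination (-4 : ℂ) * hcos + z ^ 2 * hc

lemma halfAngleFactor_eq_zero_iff {a ω : ℝ} (ha : 1 < a) (hω : Real.cos (ω / 2) = a * (ω / 2))
    {z : ℂ} (hz : |z.im| < 3) : halfAngleFactor a z = 0 ↔ z = ω := by
  have hcos_iff : halfAngleFactor a z = 0 ↔ Complex.cos (z / 2) = a * (z / 2) := by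
    rw [halfAngleFactor, sub_eq_zero]
    constructor <;> intro h
    · linear_combination h / 2
    · linear_combination 2 * h
  rw [hcos_iff]
  constructor
  · intro h
    have := Complex.eq_ofReal_of_cos_eq_mul ha hω (by simp [abs_div]; linarith) h
    push_cast at this
    linear_combination 2 * this
  · rintro rfl
    rw [← Complex.ofReal_ofNat, ← Complex.ofReal_div, ← Complex.ofReal_cos, hω]
    push_cast; ring

lemma cos_half_eq_abs_mul_half_of_eq_zero {c ω : ℝ} (hc : 1 < |c|) (hω : 0 < ω)
    (hzero : -c ^ 2 * ω ^ 2 + 2 + 2 * Real.cos ω = 0) : Real.cos (ω / 2) = |c| * (ω / 2) := by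
  have hcos := Real.cos_sq (ω / 2)
  rw [show 2 * (ω / 2) = ω by ring] at hcos
  have hc2 : 1 < c ^ 2 := by nlinarith [sq_abs c, abs_nonneg c]
  have hω2 : ω < 2 := by nlinarith [cos_le_one ω, mul_pos (sub_pos.2 hc2) (pow_pos hω 2)]
  have hpos : 0 < Real.cos (ω / 2) :=
    cos_pos_of_mem_Ioo ⟨by linarith [pi_pos], by linarith [pi_gt_three]⟩
  have hsq : Real.cos (ω / 2) ^ 2 = (|c| * (ω / 2)) ^ 2 := by
    rw [mul_pow, sq_abs]; linarith
  exact (sq_eq_sq₀ hpos.le (by positivity)).1 hsq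

/-- For `|c| > 1` and `ω` the unique positive real zero of `B̃_c`, there is a
function `g` holomorphic and nonvanishing on the open strip `{|Im z| < 3}`
such that `B̃_c(z) = (z - ω)(z + ω) g(z)` there.  In particular `1/B̃_c` is
meromorphic on the strip with only simple poles at `±ω`. -/
theorem symbol_factorization_on_strip (c ω : ℝ) (hc : 1 < |c|) (hω : 0 < ω)
    (hzero : -c ^ 2 * ω ^ 2 + 2 + 2 * Real.cos ω = 0) :
    ∃ g : ℂ → ℂ,
      DifferentiableOn ℂ g {z : ℂ | |z.im| < 3} ∧
      ∀ z ∈ {z : ℂ | |z.im| < 3}, g z ≠ 0 ∧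
        -(c : ℂ) ^ 2 * z ^ 2 + 2 + 2 * Complex.cos z
          = (z - (ω : ℂ)) * (z + (ω : ℂ)) * g z := by
  set S := {z : ℂ | |z.im| < 3}
  have hS : IsOpen S := isOpen_lt (continuous_abs.comp Complex.continuous_im) continuous_const
  have hS_neg : ∀ z ∈ S, -z ∈ S := fun z hz ↦ by simpa [S] using hz
  have hωc := cos_half_eq_abs_mul_half_of_eq_zero hc hω hzero
  have hderiv : -Complex.sin ((ω : ℂ) / 2) - (|c| : ℝ) ≠ 0 := by
    rw [← Complex.ofReal_ofNat, ← Complex.ofReal_div, ← Complex.ofReal_sin, ← Complex.ofReal_neg,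
      ← Complex.ofReal_sub, Complex.ofReal_ne_zero]
    linarith [Real.neg_one_le_sin (ω / 2)]
  obtain ⟨g, hg, hfg⟩ := Complex.exists_eq_sub_mul_of_hasDerivAt_ne_zero hS
    (differentiable_halfAngleFactor |c|).differentiableOn (by simp [S])
    (fun z hz ↦ halfAngleFactor_eq_zero_iff hc hωc hz) (hasDerivAt_halfAngleFactor _ _) hderiv
  -- `halfAngleFactor |c| (-z) = (-z - ω) * g (-z) = (z + ω) * -g (-z)`
  refine ⟨fun z ↦ g z * -g (-z), hg.mul (hg.comp (differentiableOn_neg S) hS_neg).neg,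
    fun z hz ↦ ⟨mul_ne_zero (hfg z hz).1 (neg_ne_zero.2 (hfg (-z) (hS_neg z hz)).1), ?_⟩⟩
  rw [neg_sq_mul_sq_add_two_add_two_cos_eq, (hfg z hz).2, (hfg (-z) (hS_neg z hz)).2]
  ring
end

section
/- Let μ be a real number with |μ| ≤ 1/2 and let K ∈ (0, π/2). Then λ_μ^+(K) − (2+μ)(1 − cos K) = √(μ² + 4(1+μ)cos²(K)) + (2+μ)cos(K) ≥ √2·cos(K) > 0; and, setting υ := μ sin(K) / (λ_μ^+(K) − (2+μ)(1−cos K)), the vector (iυ, 1) ∈ ℂ² is an eigenvector of the matrix D̃_μ[K] with eigenvalue λ_μ^+(K). Moreover |υ| ≤ |μ|/(√2 cos K). -/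
/-!
The eigenvalue `λ = λ_μ⁺(K)` is a root of the characteristic polynomial of `D̃_μ[K]`:
with `s = √(μ² + 4(1+μ)cos²K)` one has
`(λ - (2+μ)(1-cos K)) (λ - (2+μ)(1+cos K)) = s² - (2+μ)² cos²K = μ² sin²K`.
Hence, as soon as the first factor `s + (2+μ) cos K` is nonzero, `υ = μ sin K / (λ - (2+μ)(1-cos K))`
solves both rows of `D̃_μ[K] (iυ, 1) = λ (iυ, 1)`. For `μ ≥ -1/2` we have `s ≥ √2 cos K`, which gives the
lower bound on that factor and, with `|sin K| ≤ 1`, the bound on `|υ|`.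
-/

open Real

lemma mulVec_I_mul_one_eq_smul_of_real {a b d lam υ : ℝ}
    (h₁ : a * υ + b = lam * υ) (h₂ : b * υ + d = lam) :
    !![(a : ℂ), Complex.I * b; -(Complex.I * b), d].mulVec ![Complex.I * υ, 1]
      = (lam : ℂ) • ![Complex.I * υ, 1] := by
  have c₁ : (a * υ + b : ℂ) = lam * υ := by exact_mod_cast h₁
  have c₂ : (b * υ + d : ℂ) = lam := by exact_mod_cast h₂
  ext i
  fin_cases i <;>
    simp only [Matrix.mulVec, dotProduct, Fin.sum_univ_two, Fin.zero_eta, Fin.mk_one, Fin.isValue,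
      Matrix.of_apply, Matrix.cons_val', Matrix.cons_val_fin_one, Matrix.cons_val_zero,
      Matrix.cons_val_one, neg_mul, mul_one, Pi.smul_apply, smul_eq_mul]
  · linear_combination Complex.I * c₁
  · linear_combination c₂ - (b * υ : ℂ) * Complex.I_sq

lemma eigen_relations_of_charpoly {F : Type*} [Field F] {a b d lam : F}
    (hchar : (lam - a) * (lam - d) = b ^ 2) (hne : lam - a ≠ 0) :
    a * (b / (lam - a)) + b = lam * (b / (lam - a)) ∧ b * (b / (lam - a)) + d = lam := by
  constructor
  · field_simp
    ring
  · field_simp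
    linear_combination -hchar

/-- Completing the square: `μ² + 4(1+μ)c² = (μ + 2c²)² + 4c²(1 - c²)`. -/
lemma symbol_disc_nonneg (μ K : ℝ) : 0 ≤ μ ^ 2 + 4 * (1 + μ) * cos K ^ 2 := by
  nlinarith [sq_nonneg (μ + 2 * cos K ^ 2), sq_nonneg (cos K), cos_sq_le_one K]

lemma symbol_charpoly (μ K : ℝ) :
    (√(μ ^ 2 + 4 * (1 + μ) * cos K ^ 2) + (2 + μ) * cos K)
        * (√(μ ^ 2 + 4 * (1 + μ) * cos K ^ 2) - (2 + μ) * cos K)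
      = (μ * sin K) ^ 2 := by
  have hs := sq_sqrt (symbol_disc_nonneg μ K)
  linear_combination hs - μ ^ 2 * cos_sq_add_sin_sq K

lemma sqrt_two_mul_le_sqrt_disc {μ c : ℝ} (hμ : -(1 / 2) ≤ μ) (hc : 0 ≤ c) :
    √2 * c ≤ √(μ ^ 2 + 4 * (1 + μ) * c ^ 2) := by
  rw [show √2 * c = √(2 * c ^ 2) by rw [sqrt_mul zero_le_two, sqrt_sq hc]]
  exact sqrt_le_sqrt (by nlinarith [sq_nonneg μ, sq_nonneg c])

/-- For `|μ| ≤ 1/2` and `K ∈ (0, π/2)`: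
`λ_μ⁺(K) - (2+μ)(1 - cos K) = √(μ² + 4(1+μ)cos²K) + (2+μ)cos K ≥ √2 cos K > 0`;
the vector `(iυ, 1)` with `υ = μ sin K / (λ_μ⁺(K) - (2+μ)(1-cos K))` is an
eigenvector of `D̃_μ[K]` with eigenvalue `λ_μ⁺(K)`; and `|υ| ≤ |μ|/(√2 cos K)`. -/
theorem symbol_matrix_eigenvector (μ K : ℝ) (hμ : |μ| ≤ 1 / 2)
    (hK0 : 0 < K) (hKpi : K < Real.pi / 2) :
    let lam : ℝ := 2 + μ + Real.sqrt (μ ^ 2 + 4 * (1 + μ) * Real.cos K ^ 2)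
    let υ : ℝ := μ * Real.sin K / (lam - (2 + μ) * (1 - Real.cos K))
    let D : Matrix (Fin 2) (Fin 2) ℂ :=
      !![(((2 + μ) * (1 - Real.cos K) : ℝ) : ℂ),
         Complex.I * (μ : ℂ) * (Real.sin K : ℂ);
         -(Complex.I * (μ : ℂ) * (Real.sin K : ℂ)),
         (((2 + μ) * (1 + Real.cos K) : ℝ) : ℂ)]
    (lam - (2 + μ) * (1 - Real.cos K)
        = Real.sqrt (μ ^ 2 + 4 * (1 + μ) * Real.cos K ^ 2) + (2 + μ) * Real.cos K) ∧
    Real.sqrt 2 * Real.cos K ≤ lam - (2 + μ) * (1 - Real.cos K) ∧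
    0 < Real.sqrt 2 * Real.cos K ∧
    D.mulVec ![Complex.I * (υ : ℂ), 1] = (lam : ℂ) • ![Complex.I * (υ : ℂ), 1] ∧
    |υ| ≤ |μ| / (Real.sqrt 2 * Real.cos K) := by
  intro lam υ D
  obtain ⟨hμ₁, hμ₂⟩ := abs_le.mp hμ
  have hc : 0 < cos K := cos_pos_of_mem_Ioo ⟨by linarith [pi_pos], hKpi⟩
  have hgap : lam - (2 + μ) * (1 - cos K) = √(μ ^ 2 + 4 * (1 + μ) * cos K ^ 2) + (2 + μ) * cos K := by
    ring
  have hpos : 0 < √2 * cos K := by positivity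
  have hle : √2 * cos K ≤ lam - (2 + μ) * (1 - cos K) := by
    rw [hgap]
    nlinarith [sqrt_two_mul_le_sqrt_disc hμ₁ hc.le]
  have hchar : (lam - (2 + μ) * (1 - cos K)) * (lam - (2 + μ) * (1 + cos K)) = (μ * sin K) ^ 2 := by
    rw [← symbol_charpoly]
    ring
  obtain ⟨h₁, h₂⟩ := eigen_relations_of_charpoly hchar (hpos.trans_le hle).ne'
  refine ⟨hgap, hle, hpos, ?_, ?_⟩
  · have hD : D = !![(((2 + μ) * (1 - cos K) : ℝ) : ℂ), Complex.I * ((μ * sin K : ℝ) : ℂ);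
        -(Complex.I * ((μ * sin K : ℝ) : ℂ)), (((2 + μ) * (1 + cos K) : ℝ) : ℂ)] := by
      simp only [D, Complex.ofReal_mul, mul_assoc]
    rw [hD]
    exact mulVec_I_mul_one_eq_smul_of_real h₁ h₂
  · have hnum : |μ * sin K| ≤ |μ| := by
      rw [abs_mul]
      exact mul_le_of_le_one_right (abs_nonneg μ) (abs_sin_le_one K)
    rw [abs_div, abs_of_pos (hpos.trans_le hle)]
    exact div_le_div₀ (abs_nonneg μ) hnum hpos hle
end

section
/- Let μ be a real number with 0 < |μ| < 1. Then the functions λ_μ^± are differentiable on ℝ, with |(λ_μ^±)′(K)| = 4(1+μ)|sin(K)cos(K)| / √(μ² + 4(1+μ)cos²(K)) for all K. Moreover, if −1 < μ < 0 then |(λ_μ^±)′(K)| ≤ 2|sin(K)| ≤ 2|K| for all K, while if 0 < μ < 1 then |(λ_μ^±)′(K)| ≤ 2(1+μ)|K| for all K. -/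
/-!
With `D(K) = μ² + 4(1+μ)cos²K > 0`, the chain rule gives `(λ_μ^±)′ = ∓ 4(1+μ) sin K cos K / √D`.
Whenever `c² cos²K ≤ D` this is at most `(4(1+μ)/c)|sin K|` in absolute value. For `-1 < μ < 0`
take `c = 2(1+μ)`, since `D - 4(1+μ)²cos²K = μ² - 4(1+μ)μ cos²K ≥ 0`; for `μ > 0` take `c = 2`.
Finally `|sin K| ≤ |K|`.
-/

open Real

theorem hasDerivAt_sqrt_add_mul_cos_sq {a b K : ℝ} (h : a + b * cos K ^ 2 ≠ 0) :
    HasDerivAt (fun K => √(a + b * cos K ^ 2))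
      (-(b * (sin K * cos K)) / √(a + b * cos K ^ 2)) K := by
  have hD : HasDerivAt (fun K => a + b * cos K ^ 2) (b * (2 * cos K ^ 1 * -sin K)) K :=
    (((hasDerivAt_cos K).pow 2).const_mul b).const_add a
  convert hD.sqrt h using 1
  field_simp

section

variable {a b c K : ℝ}

theorem abs_deriv_const_add_sqrt_add_mul_cos_sq (hb : 0 ≤ b) (h : a + b * cos K ^ 2 ≠ 0) :
    |deriv (fun K => c + √(a + b * cos K ^ 2)) K| =
      b * |sin K * cos K| / √(a + b * cos K ^ 2) := by
  rw [((hasDerivAt_sqrt_add_mul_cos_sq h).const_add c).deriv, abs_div, abs_neg, abs_mul,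
    abs_of_nonneg hb, abs_of_nonneg (sqrt_nonneg _)]

theorem abs_deriv_const_sub_sqrt_add_mul_cos_sq (hb : 0 ≤ b) (h : a + b * cos K ^ 2 ≠ 0) :
    |deriv (fun K => c - √(a + b * cos K ^ 2)) K| =
      b * |sin K * cos K| / √(a + b * cos K ^ 2) := by
  rw [((hasDerivAt_sqrt_add_mul_cos_sq h).const_sub c).deriv, abs_neg, abs_div, abs_neg,
    abs_mul, abs_of_nonneg hb, abs_of_nonneg (sqrt_nonneg _)]

end

theorem mul_abs_mul_div_sqrt_le {b c x y D : ℝ} (hb : 0 ≤ b) (hc : 0 < c)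
    (hD : c ^ 2 * y ^ 2 ≤ D) : b * |x * y| / √D ≤ b / c * |x| := by
  rcases (sqrt_nonneg D).eq_or_lt with h0 | hpos
  · rw [← h0, div_zero]
    positivity
  have hy : c * |y| ≤ √D := le_sqrt_of_sq_le (by rwa [mul_pow, sq_abs])
  rw [div_le_iff₀ hpos, abs_mul]
  calc b * (|x| * |y|) = b / c * |x| * (c * |y|) := by field_simp
    _ ≤ b / c * |x| * √D := by gcongr

/-- For `0 < |μ| < 1` the eigenvalue curves
`λ_μ^±(K) = 2 + μ ± √(μ² + 4(1+μ)cos²K)` are differentiable, with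
`|(λ_μ^±)′(K)| = 4(1+μ)|sin K cos K| / √(μ² + 4(1+μ)cos²K)`; moreover
`|(λ_μ^±)′(K)| ≤ 2|sin K| ≤ 2|K|` when `μ < 0`, and
`|(λ_μ^±)′(K)| ≤ 2(1+μ)|K|` when `μ > 0`. -/
theorem eigenvalue_curve_derivative_bounds (μ : ℝ) (hμ0 : 0 < |μ|) (hμ1 : |μ| < 1) :
    let lp : ℝ → ℝ := fun K => 2 + μ + Real.sqrt (μ ^ 2 + 4 * (1 + μ) * Real.cos K ^ 2)
    let lm : ℝ → ℝ := fun K => 2 + μ - Real.sqrt (μ ^ 2 + 4 * (1 + μ) * Real.cos K ^ 2)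
    (∀ K : ℝ, DifferentiableAt ℝ lp K ∧ DifferentiableAt ℝ lm K) ∧
    (∀ K : ℝ,
      |deriv lp K| = 4 * (1 + μ) * |Real.sin K * Real.cos K| /
        Real.sqrt (μ ^ 2 + 4 * (1 + μ) * Real.cos K ^ 2) ∧
      |deriv lm K| = 4 * (1 + μ) * |Real.sin K * Real.cos K| /
        Real.sqrt (μ ^ 2 + 4 * (1 + μ) * Real.cos K ^ 2)) ∧
    (μ < 0 → ∀ K : ℝ,
      (|deriv lp K| ≤ 2 * |Real.sin K| ∧ |deriv lm K| ≤ 2 * |Real.sin K|) ∧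
      2 * |Real.sin K| ≤ 2 * |K|) ∧
    (0 < μ → ∀ K : ℝ,
      |deriv lp K| ≤ 2 * (1 + μ) * |K| ∧ |deriv lm K| ≤ 2 * (1 + μ) * |K|) := by
  intro lp lm
  have hμ1' : 0 < 1 + μ := by linarith [(abs_lt.mp hμ1).1]
  have hb : 0 ≤ 4 * (1 + μ) := by positivity
  have hD (K : ℝ) : μ ^ 2 + 4 * (1 + μ) * cos K ^ 2 ≠ 0 := by
    have : 0 < μ ^ 2 := by rw [← sq_abs]; positivity
    positivity
  have habs (K : ℝ) := And.intro (abs_deriv_const_add_sqrt_add_mul_cos_sq (c := 2 + μ) hb (hD K))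
    (abs_deriv_const_sub_sqrt_add_mul_cos_sq (c := 2 + μ) hb (hD K))
  refine ⟨fun K => ⟨((hasDerivAt_sqrt_add_mul_cos_sq (hD K)).const_add _).differentiableAt,
    ((hasDerivAt_sqrt_add_mul_cos_sq (hD K)).const_sub _).differentiableAt⟩, habs, ?_, ?_⟩
  · intro hμ K
    have hle : (2 * (1 + μ)) ^ 2 * cos K ^ 2 ≤ μ ^ 2 + 4 * (1 + μ) * cos K ^ 2 := by
      nlinarith [mul_nonneg (mul_nonneg hb (neg_nonneg.mpr hμ.le)) (sq_nonneg (cos K))]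
    have hbound := mul_abs_mul_div_sqrt_le (x := sin K) hb (by positivity) hle
    rw [show 4 * (1 + μ) / (2 * (1 + μ)) = 2 by field_simp; ring] at hbound
    rw [(habs K).1, (habs K).2]
    exact ⟨⟨hbound, hbound⟩, by linarith [abs_sin_le_abs (x := K)]⟩
  · intro hμ K
    have hle : 2 ^ 2 * cos K ^ 2 ≤ μ ^ 2 + 4 * (1 + μ) * cos K ^ 2 := by
      nlinarith [mul_nonneg hμ.le (sq_nonneg (cos K))]
    have hbound := (mul_abs_mul_div_sqrt_le (x := sin K) hb two_pos hle).trans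
      (mul_le_mul_of_nonneg_left abs_sin_le_abs (by linarith))
    rw [show 4 * (1 + μ) / 2 = 2 * (1 + μ) by ring] at hbound
    rw [(habs K).1, (habs K).2]
    exact ⟨hbound, hbound⟩
end

section
/- Let c be a real number with |c| > 1 and let μ ∈ (−1, 1) satisfy |μ| ≤ (c² − 1)/4. Then both functions K ↦ c²K² − λ_μ^+(K) and K ↦ c²K² − λ_μ^−(K) are strictly increasing on (0, ∞). -/
/-!
Write `λ^±(K) = 2 + μ ± √(μ² + (2√(1+μ) cos K)²)`. Since `t ↦ √(μ² + t²)` is `1`-Lipschitz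
(it is `|μ + t i|`) and `|cos y - cos x| ≤ (y² - x²)/2` for `0 ≤ x ≤ y`, the square root moves by
at most `√(1+μ) (y² - x²)`, which is less than the increment `c² (y² - x²)` of `c²K²` as soon as
`1 + μ < c⁴`; the hypothesis `|μ| ≤ (c² - 1)/4` gives `1 + μ ≤ (c² + 3)/4 < c² < c⁴`.
-/

open Real

lemma abs_sqrt_sq_add_sq_sub_le (a u v : ℝ) :
    |√(a ^ 2 + u ^ 2) - √(a ^ 2 + v ^ 2)| ≤ |u - v| := by
  rw [← Complex.norm_add_mul_I, ← Complex.norm_add_mul_I]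
  calc |‖(a : ℂ) + u * Complex.I‖ - ‖(a : ℂ) + v * Complex.I‖|
      ≤ ‖((a : ℂ) + u * Complex.I) - ((a : ℂ) + v * Complex.I)‖ := abs_norm_sub_norm_le _ _
    _ = |u - v| := by
      rw [add_sub_add_left_eq_sub, ← sub_mul, ← Complex.ofReal_sub, norm_mul,
        Complex.norm_I, mul_one, Complex.norm_real, Real.norm_eq_abs]

lemma abs_cos_sub_cos_le_sq_sub_sq {x y : ℝ} (hx : 0 ≤ x) (hxy : x ≤ y) :
    |cos y - cos x| ≤ (y ^ 2 - x ^ 2) / 2 := by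
  have h_sum : |sin ((y + x) / 2)| ≤ (y + x) / 2 :=
    abs_sin_le_abs.trans_eq (abs_of_nonneg (by linarith))
  have h_diff : |sin ((y - x) / 2)| ≤ (y - x) / 2 :=
    abs_sin_le_abs.trans_eq (abs_of_nonneg (by linarith))
  calc |cos y - cos x|
      = 2 * (|sin ((y + x) / 2)| * |sin ((y - x) / 2)|) := by
        rw [cos_sub_cos, abs_mul, abs_mul, abs_neg, abs_two, mul_assoc]
    _ ≤ 2 * ((y + x) / 2 * ((y - x) / 2)) := by gcongr; linarith
    _ = (y ^ 2 - x ^ 2) / 2 := by ring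

lemma abs_sqrt_dispersion_sub_le {μ x y : ℝ} (hμ : -1 ≤ μ) (hx : 0 ≤ x) (hxy : x ≤ y) :
    |√(μ ^ 2 + 4 * (1 + μ) * cos y ^ 2) - √(μ ^ 2 + 4 * (1 + μ) * cos x ^ 2)| ≤
      √(1 + μ) * (y ^ 2 - x ^ 2) := by
  have h_sq : ∀ K, 4 * (1 + μ) * cos K ^ 2 = (2 * √(1 + μ) * cos K) ^ 2 := fun K => by
    rw [mul_pow, mul_pow, sq_sqrt (by linarith)]; ring
  calc _ ≤ |2 * √(1 + μ) * cos y - 2 * √(1 + μ) * cos x| := by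
        rw [h_sq, h_sq]; exact abs_sqrt_sq_add_sq_sub_le _ _ _
    _ = 2 * √(1 + μ) * |cos y - cos x| := by
        rw [← mul_sub, abs_mul, abs_of_nonneg (by positivity)]
    _ ≤ 2 * √(1 + μ) * ((y ^ 2 - x ^ 2) / 2) := by
        gcongr; exact abs_cos_sub_cos_le_sq_sub_sq hx hxy
    _ = √(1 + μ) * (y ^ 2 - x ^ 2) := by ring

lemma strictMonoOn_sub_add_and_sub_sub {s : Set ℝ} {h g : ℝ → ℝ} (b : ℝ)
    (hgh : ∀ x ∈ s, ∀ y ∈ s, x < y → |g y - g x| < h y - h x) :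
    StrictMonoOn (fun K => h K - (b + g K)) s ∧ StrictMonoOn (fun K => h K - (b - g K)) s := by
  constructor <;> intro x hx y hy hxy <;>
    linarith [abs_lt.mp (hgh x hx y hy hxy)]

theorem dispersion_functions_strictMono_general (c μ : ℝ) (hc : 1 < |c|)
    (hμl : -1 < μ) (hμc : |μ| ≤ (c ^ 2 - 1) / 4) :
    StrictMonoOn (fun K : ℝ =>
      c ^ 2 * K ^ 2 - (2 + μ + Real.sqrt (μ ^ 2 + 4 * (1 + μ) * Real.cos K ^ 2)))
      (Set.Ioi 0) ∧
    StrictMonoOn (fun K : ℝ =>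
      c ^ 2 * K ^ 2 - (2 + μ - Real.sqrt (μ ^ 2 + 4 * (1 + μ) * Real.cos K ^ 2)))
      (Set.Ioi 0) := by
  have hc2 : 1 < c ^ 2 := (one_lt_sq_iff_one_lt_abs c).mpr hc
  have h_root : √(1 + μ) < c ^ 2 := by
    rw [sqrt_lt' (by linarith)]
    nlinarith [le_abs_self μ]
  refine strictMonoOn_sub_add_and_sub_sub (h := fun K => c ^ 2 * K ^ 2) (2 + μ) ?_
  intro x hx y _ hxy
  have hx : 0 < x := hx
  have h_incr : 0 < y ^ 2 - x ^ 2 := by nlinarith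
  calc _ ≤ √(1 + μ) * (y ^ 2 - x ^ 2) := abs_sqrt_dispersion_sub_le hμl.le hx.le hxy.le
    _ < c ^ 2 * (y ^ 2 - x ^ 2) := by gcongr
    _ = c ^ 2 * y ^ 2 - c ^ 2 * x ^ 2 := by ring

/-- For `|c| > 1` and `μ ∈ (-1,1)` with `|μ| ≤ (c² - 1)/4`, the functions
`K ↦ c²K² - λ_μ^±(K)` are strictly increasing on `(0, ∞)`. -/
theorem dispersion_functions_strictMono (c μ : ℝ) (hc : 1 < |c|)
    (hμl : -1 < μ) (hμu : μ < 1) (hμc : |μ| ≤ (c ^ 2 - 1) / 4) :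
    StrictMonoOn (fun K : ℝ =>
      c ^ 2 * K ^ 2 - (2 + μ + Real.sqrt (μ ^ 2 + 4 * (1 + μ) * Real.cos K ^ 2)))
      (Set.Ioi 0) ∧
    StrictMonoOn (fun K : ℝ =>
      c ^ 2 * K ^ 2 - (2 + μ - Real.sqrt (μ ^ 2 + 4 * (1 + μ) * Real.cos K ^ 2)))
      (Set.Ioi 0) :=
  dispersion_functions_strictMono_general c μ hc hμl hμc
end

section
/- Let c be a real number with |c| > 1 and let μ ∈ (−1, 1) satisfy |μ| ≤ (c² − 1)/4. Then for a real number K, the equality c²K² = λ_μ^−(K) holds if and only if K = 0. -/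
/-!
Put `a = 2 + μ`. Since `cos² K = 1 - sin² K`, the radicand is `a² - 4(1 + μ) sin² K`, so `λ_μ⁻(0) = 0`,
and for `K ≠ 0` we show `λ_μ⁻(K) < c²K²`. This is clear when `c²K² > a ≥ λ_μ⁻(K)`. Otherwise both
sides of `a - c²K² < √(a² - 4(1 + μ) sin² K)` may be squared, and `cos K ≥ 1 - K²/2` reduces the claim
to the positivity of a function of `t = K²` that is affine on `[0, a/c²]`. At `t = 0` this is where
`|μ| ≤ (c² - 1)/4` enters; at `t = a/c²` it is the quadratic `a s² - 4(1 + μ) s + a(1 + μ)` in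
`s = c²`, whose discriminant `-16(1 + μ)μ²` is nonpositive.
-/

open Real

noncomputable def acousticEigenvalue (μ K : ℝ) : ℝ :=
  2 + μ - √(μ ^ 2 + 4 * (1 + μ) * cos K ^ 2)

lemma acousticEigenvalue_zero {μ : ℝ} (hμ : -2 ≤ μ) : acousticEigenvalue μ 0 = 0 := by
  have hradicand : μ ^ 2 + 4 * (1 + μ) * cos 0 ^ 2 = (2 + μ) ^ 2 := by rw [cos_zero]; ring
  rw [acousticEigenvalue, hradicand, sqrt_sq (by linarith), sub_self]

lemma acousticEigenvalue_le (μ K : ℝ) : acousticEigenvalue μ K ≤ 2 + μ :=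
  sub_le_self _ (sqrt_nonneg _)

lemma acousticEigenvalue_eq (μ K : ℝ) :
    acousticEigenvalue μ K = 2 + μ - √((2 + μ) ^ 2 - 4 * (1 + μ) * sin K ^ 2) := by
  rw [acousticEigenvalue, cos_sq']
  ring_nf

lemma sin_sq_le_sq_sub_pow_four_div_four {x : ℝ} (hx : x ^ 2 ≤ 2) :
    sin x ^ 2 ≤ x ^ 2 - x ^ 4 / 4 := by
  have hcos : (1 - x ^ 2 / 2) ^ 2 ≤ cos x ^ 2 :=
    pow_le_pow_left₀ (by linarith) one_sub_sq_div_two_le_cos 2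
  nlinarith [sin_sq_add_cos_sq x]

section Bounds

variable {s μ : ℝ}

lemma acoustic_bound_at_zero_pos (hs : 1 < s) (hμl : -1 < μ) (hμs : |μ| ≤ (s - 1) / 4) :
    0 < 4 * (s - 1) + 2 * μ * (s - 2) := by
  obtain ⟨hμ_lower, hμ_upper⟩ := abs_le.mp hμs
  rcases le_or_gt 2 s with hs2 | hs2
  · nlinarith [mul_nonneg (by linarith : 0 ≤ μ + 1) (by linarith : 0 ≤ s - 2)]
  · nlinarith [mul_nonneg (by linarith : 0 ≤ (s - 1) / 4 - μ) (by linarith : 0 ≤ 2 - s)]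

lemma acoustic_bound_at_edge_pos (hs : 1 < s) (hμl : -1 < μ) :
    0 < (2 + μ) * s ^ 2 - 4 * (1 + μ) * s + (1 + μ) * (2 + μ) := by
  have hsos : (2 + μ) * ((2 + μ) * s ^ 2 - 4 * (1 + μ) * s + (1 + μ) * (2 + μ)) =
      ((2 + μ) * s - 2 * (1 + μ)) ^ 2 + (1 + μ) * μ ^ 2 := by ring
  rcases eq_or_ne μ 0 with rfl | hμ0
  · nlinarith
  · refine pos_of_mul_pos_right ?_ (by linarith : (0 : ℝ) ≤ 2 + μ)
    rw [hsos]
    have : 0 < 1 + μ := by linarith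
    positivity

lemma acoustic_bound_pos {t : ℝ} (hs : 1 < s) (hμl : -1 < μ) (hμs : |μ| ≤ (s - 1) / 4)
    (ht : 0 < t) (hts : s * t ≤ 2 + μ) :
    0 < 4 * (s - 1) + 2 * μ * (s - 2) + t * (1 + μ - s ^ 2) := by
  have hzero := acoustic_bound_at_zero_pos hs hμl hμs
  have hedge := acoustic_bound_at_edge_pos hs hμl
  -- the affine function is the convex combination of its values at `t = 0` and `t = (2 + μ) / s`
  have hinterp : (2 + μ) * s * (4 * (s - 1) + 2 * μ * (s - 2) + t * (1 + μ - s ^ 2)) =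
      (2 + μ - s * t) * (s * (4 * (s - 1) + 2 * μ * (s - 2))) +
        s * t * ((2 + μ) * s ^ 2 - 4 * (1 + μ) * s + (1 + μ) * (2 + μ)) := by ring
  have hscale : 0 < (2 + μ) * s := by nlinarith
  refine pos_of_mul_pos_right ?_ hscale.le
  rw [hinterp]
  exact add_pos_of_nonneg_of_pos
    (mul_nonneg (by linarith) (mul_pos (by linarith) hzero).le)
    (mul_pos (mul_pos (by linarith) ht) hedge)

end Bounds

lemma acousticEigenvalue_lt {c μ K : ℝ} (hc : 1 < c ^ 2) (hμl : -1 < μ)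
    (hμc : |μ| ≤ (c ^ 2 - 1) / 4) (hK : K ≠ 0) : acousticEigenvalue μ K < c ^ 2 * K ^ 2 := by
  rcases lt_or_ge (2 + μ) (c ^ 2 * K ^ 2) with hlarge | hsmall
  · exact (acousticEigenvalue_le μ K).trans_lt hlarge
  have hK2 : 0 < K ^ 2 := by positivity
  have hK2_le : K ^ 2 ≤ 2 := by nlinarith [abs_le.mp hμc]
  have hbound := acoustic_bound_pos hc hμl hμc hK2 hsmall
  have hsq : (2 + μ - c ^ 2 * K ^ 2) ^ 2 < (2 + μ) ^ 2 - 4 * (1 + μ) * sin K ^ 2 := by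
    nlinarith [sin_sq_le_sq_sub_pow_four_div_four hK2_le, mul_pos hK2 hbound]
  rw [acousticEigenvalue_eq, sub_lt_comm]
  exact (lt_sqrt (by linarith)).2 hsq

theorem acoustic_branch_only_zero_general (c μ : ℝ) (hc : 1 < |c|)
    (hμl : -1 < μ) (hμc : |μ| ≤ (c ^ 2 - 1) / 4) :
    ∀ K : ℝ,
      c ^ 2 * K ^ 2 = 2 + μ - Real.sqrt (μ ^ 2 + 4 * (1 + μ) * Real.cos K ^ 2) ↔
      K = 0 := by
  have hc2 : 1 < c ^ 2 := (one_lt_sq_iff_one_lt_abs c).mpr hc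
  intro K
  change c ^ 2 * K ^ 2 = acousticEigenvalue μ K ↔ K = 0
  constructor
  · intro h
    by_contra hK
    exact (acousticEigenvalue_lt hc2 hμl hμc hK).ne' h
  · rintro rfl
    rw [acousticEigenvalue_zero (by linarith)]
    ring

/-- For `|c| > 1` and `μ ∈ (-1,1)` with `|μ| ≤ (c² - 1)/4`, the equation
`c²K² = λ_μ⁻(K)` holds if and only if `K = 0`. -/
theorem acoustic_branch_only_zero (c μ : ℝ) (hc : 1 < |c|)
    (hμl : -1 < μ) (hμu : μ < 1) (hμc : |μ| ≤ (c ^ 2 - 1) / 4) :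
    ∀ K : ℝ,
      c ^ 2 * K ^ 2 = 2 + μ - Real.sqrt (μ ^ 2 + 4 * (1 + μ) * Real.cos K ^ 2) ↔
      K = 0 :=
  acoustic_branch_only_zero_general c μ hc hμl hμc
end

section
/- For every real number c with |c| > 1 there exists a constant C(c) > 0 such that for every μ ∈ (−1, 1) with |μ| ≤ (c² − 1)/4, one has |ω_c^μ − ω_c| ≤ C(c)·|μ|, where ω_c^μ is the unique positive solution of c²ω² = λ_μ^+(ω) and ω_c is the unique positive zero of B̃_c(k) = −c²k² + 2 + 2cos(k). -/
/-! Writing `t = cos ω`, the square root in `λ_μ⁺(ω)` is within `|μ|` of `2|t|`, so `ω` is a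
`2|μ|`-approximate zero of `B̃_c`. Both `ω` and `ω_c` lie in `[0, π/2]`: beyond `π/2` the
parabola `c²ω²` outgrows `2 + 2|μ| + 2|cos ω|` because `|cos ω| ≤ ω - π/2` there. On `[0, π]`
the function `-B̃_c` grows at least as fast as `c²k²`, which turns the defect `|B̃_c(ω)| ≤ 2|μ|`
into `|ω - ω_c| ≤ 2|μ|`. -/

open Real

noncomputable def bTilde (c k : ℝ) : ℝ := -c ^ 2 * k ^ 2 + 2 + 2 * cos k

lemma abs_sqrt_sub_two_abs_le (μ t : ℝ) (ht : |t| ≤ 1) :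
    |(√(μ ^ 2 + 4 * (1 + μ) * t ^ 2) - 2 * |t|)| ≤ |μ| := by
  have hμt : |μ * t ^ 2| ≤ |μ| * |t| := by
    rw [abs_mul, abs_pow]
    exact mul_le_mul_of_nonneg_left (by nlinarith [abs_nonneg t]) (abs_nonneg μ)
  have hupper : √(μ ^ 2 + 4 * (1 + μ) * t ^ 2) ≤ 2 * |t| + |μ| :=
    sqrt_le_iff.mpr ⟨by positivity, by nlinarith [le_abs_self (μ * t ^ 2), sq_abs t, sq_abs μ]⟩
  have hlower : |(2 * |t| - |μ|)| ≤ √(μ ^ 2 + 4 * (1 + μ) * t ^ 2) :=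
    abs_le_sqrt (by nlinarith [neg_abs_le (μ * t ^ 2), sq_abs t, sq_abs μ])
  rw [abs_le]
  constructor <;> linarith [le_abs_self (2 * |t| - |μ|)]

lemma abs_cos_le_sub_pi_div_two {ω : ℝ} (hω : π / 2 ≤ ω) : |cos ω| ≤ ω - π / 2 := by
  calc |cos ω| = |sin (ω - π / 2)| := by rw [sin_sub_pi_div_two, abs_neg]
    _ ≤ |ω - π / 2| := abs_sin_le_abs
    _ = ω - π / 2 := abs_of_nonneg (sub_nonneg.mpr hω)

lemma lt_pi_div_two_of_mul_sq_le {b μ ω : ℝ} (hb : 1 ≤ b) (hμ : |μ| ≤ (b - 1) / 4)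
    (h : b * ω ^ 2 ≤ 2 + 2 * |μ| + 2 * |cos ω|) : ω < π / 2 := by
  by_contra! hω
  have hcos := abs_cos_le_sub_pi_div_two hω
  have hπ := pi_gt_three
  obtain ⟨x, hx, rfl⟩ : ∃ x, 0 ≤ x ∧ ω = x + π / 2 := ⟨ω - π / 2, sub_nonneg.mpr hω, by ring⟩
  -- `b (x + π/2)² ≥ 9b/4 + 3x` as `π > 3` and `b ≥ 1`, while `h` bounds it by `3/2 + b/2 + 2x`
  nlinarith [mul_nonneg (by linarith : (0 : ℝ) ≤ b) (sq_nonneg x),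
    mul_nonneg (mul_nonneg (by linarith : (0 : ℝ) ≤ π - 3) (by linarith : (0 : ℝ) ≤ b)) hx,
    mul_nonneg (sub_nonneg.mpr hb) hx,
    mul_nonneg (by linarith : (0 : ℝ) ≤ b) (by nlinarith : (0 : ℝ) ≤ π ^ 2 - 9),
    le_abs_self μ]

lemma mul_abs_sub_le_abs_bTilde_sub (c : ℝ) {x y : ℝ} (hx : x ∈ Set.Icc 0 π)
    (hy : y ∈ Set.Icc 0 π) : c ^ 2 * (x + y) * |x - y| ≤ |bTilde c x - bTilde c y| := by
  wlog hyx : y ≤ x generalizing x y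
  · rw [add_comm, abs_sub_comm, abs_sub_comm (bTilde c x)]
    exact this hy hx (le_of_not_ge hyx)
  have hcos : cos x ≤ cos y := cos_le_cos_of_nonneg_of_le_pi hy.1 hx.2 hyx
  rw [abs_of_nonneg (sub_nonneg.mpr hyx), abs_sub_comm]
  calc c ^ 2 * (x + y) * (x - y) ≤ bTilde c y - bTilde c x := by
        unfold bTilde; nlinarith
    _ ≤ |bTilde c y - bTilde c x| := le_abs_self _

/-- For each `|c| > 1` there is `C(c) > 0` such that for `μ ∈ (-1,1)` with
`|μ| ≤ (c²-1)/4`, the critical frequency `ω_c^μ` (the unique positive solution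
of `c²ω² = λ_μ⁺(ω)`) and the unique positive zero `ω_c` of
`B̃_c(k) = -c²k² + 2 + 2cos k` satisfy `|ω_c^μ - ω_c| ≤ C(c)|μ|`. -/
theorem critical_frequency_perturbation (c : ℝ) (hc : 1 < |c|) :
    ∃ C : ℝ, 0 < C ∧ ∀ μ ω ω₀ : ℝ, -1 < μ → μ < 1 → |μ| ≤ (c ^ 2 - 1) / 4 →
      0 < ω →
      c ^ 2 * ω ^ 2 = 2 + μ + Real.sqrt (μ ^ 2 + 4 * (1 + μ) * Real.cos ω ^ 2) →
      0 < ω₀ → -c ^ 2 * ω₀ ^ 2 + 2 + 2 * Real.cos ω₀ = 0 →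
      |ω - ω₀| ≤ C * |μ| := by
  refine ⟨2, two_pos, fun μ ω ω₀ _ _ hμ hω hEq hω₀ hZ => ?_⟩
  have hb : 1 ≤ c ^ 2 := ((one_lt_sq_iff_one_lt_abs c).mpr hc).le
  have hsqrt := abs_le.mp (abs_sqrt_sub_two_abs_le μ (cos ω) (abs_cos_le_one ω))
  have hω_lt : ω < π / 2 :=
    lt_pi_div_two_of_mul_sq_le hb hμ (by linarith [le_abs_self μ])
  have hω₀_lt : ω₀ < π / 2 :=
    lt_pi_div_two_of_mul_sq_le hb (by rw [abs_zero]; linarith)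
      (by rw [abs_zero]; linarith [le_abs_self (cos ω₀)])
  have hcos : |cos ω| = cos ω := abs_of_nonneg (cos_nonneg_of_mem_Icc ⟨by linarith, hω_lt.le⟩)
  have hcos₀ : 0 ≤ cos ω₀ := cos_nonneg_of_mem_Icc ⟨by linarith, hω₀_lt.le⟩
  have hdefect : |bTilde c ω| ≤ 2 * |μ| := by
    rw [hcos] at hsqrt
    rw [bTilde, abs_le]
    constructor <;> linarith [le_abs_self μ, neg_abs_le μ]
  have hscale : 1 ≤ c ^ 2 * (ω + ω₀) := by
    -- `c²ω₀² = 2 + 2 cos ω₀ ≥ 2`, so `(c²ω₀)² ≥ 2c² ≥ 1`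
    have h₀ : 1 ≤ c ^ 2 * ω₀ := by nlinarith
    nlinarith
  calc |ω - ω₀| ≤ c ^ 2 * (ω + ω₀) * |ω - ω₀| := le_mul_of_one_le_left (abs_nonneg _) hscale
    _ ≤ |bTilde c ω - bTilde c ω₀| :=
        mul_abs_sub_le_abs_bTilde_sub c ⟨hω.le, by linarith [pi_pos]⟩
          ⟨hω₀.le, by linarith [pi_pos]⟩
    _ = |bTilde c ω| := by rw [show bTilde c ω₀ = 0 from hZ, sub_zero]
    _ ≤ 2 * |μ| := hdefect
end

section
/- For all real numbers ω, θ, and R: ∫_R^{R+1} sin(ω(x+θ))·sin(ω(x−1)) dx − ∫_{R−1}^{R} sin(ω(x+θ))·sin(ω(x+1)) dx = −sin(ωθ)·sin(ω). In particular, the left-hand side is independent of R. -/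
/-! Substituting `x ↦ x + 1` moves the second integral onto `[R, R + 1]`, and there the
difference of the two integrands is the constant `-sin(ωθ) sin ω`: by product-to-sum, both
products share the oscillating term `cos(ω(2x + θ - 1))`. -/

open Real intervalIntegral

theorem sin_add_mul_sin_sub_sub_sin_add_sub_mul_sin (a b c : ℝ) :
    sin (a + b) * sin (a - c) - sin (a + b - c) * sin a = -(sin b * sin c) := by
  simp only [sin_add, sin_sub, cos_add]
  linear_combination (-(sin b * sin c)) * sin_sq_add_cos_sq a

/-- Exact trigonometric integral identity underlying the solvability functional:
for all real `ω`, `θ`, `R`,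
`∫_R^{R+1} sin(ω(x+θ)) sin(ω(x-1)) dx - ∫_{R-1}^R sin(ω(x+θ)) sin(ω(x+1)) dx
  = -sin(ωθ) sin ω`, independently of `R`. -/
theorem resonance_integral_identity (ω θ R : ℝ) :
    (∫ x in R..(R + 1), Real.sin (ω * (x + θ)) * Real.sin (ω * (x - 1))) -
    (∫ x in (R - 1)..R, Real.sin (ω * (x + θ)) * Real.sin (ω * (x + 1))) =
    -(Real.sin (ω * θ) * Real.sin ω) := by
  have shift : (∫ x in (R - 1)..R, sin (ω * (x + θ)) * sin (ω * (x + 1))) =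
      ∫ x in R..(R + 1), sin (ω * (x - 1 + θ)) * sin (ω * x) := by
    simpa using (integral_comp_add_right
      (fun x => sin (ω * (x - 1 + θ)) * sin (ω * x)) 1 (a := R - 1) (b := R))
  have integrand_const (x : ℝ) :
      sin (ω * (x + θ)) * sin (ω * (x - 1)) - sin (ω * (x - 1 + θ)) * sin (ω * x) =
        -(sin (ω * θ) * sin ω) := by
    convert sin_add_mul_sin_sub_sub_sin_add_sub_mul_sin (ω * x) (ω * θ) ω using 3 <;> ring_nf
  rw [shift, ← integral_sub (by apply Continuous.intervalIntegrable; fun_prop)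
    (by apply Continuous.intervalIntegrable; fun_prop)]
  simp [integrand_const]
end

section
/- Let a > 0, let ε ∈ (0, 1], let q be real with 0 < q ≤ min{ε/2, aε/2}, and let M ≥ 0. Suppose ς : ℝ → ℝ is measurable and satisfies ∫₀^∞ e^{2aεs}·|ς(s) − ε²σ(εs)|² ds ≤ M²ε⁷, where σ(x) = (1/4)·sech²(x/2). Then ∫₀^∞ e^{qs}·|ς(s)| ds ≤ 2ε + (M/√a)·ε³. -/
/-!
With `σ = kdvSoliton`, split `ς = (ς - ε²σ(ε·)) + ε²σ(ε·)`. Since `σ(x) ≤ e^{-x}`, the soliton part contributes at most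
`ε² ∫₀^∞ e^{-(ε-q)s} ds = ε²/(ε-q) ≤ 2ε`. For the remainder write
`e^{qs} = e^{-(aε-q)s} · e^{aεs}`; Cauchy–Schwarz against the weighted `L²` hypothesis gives at most
`(2(aε-q))^{-1/2} (M²ε⁷)^{1/2} ≤ Mε³/√a`.
-/

open MeasureTheory Real Set

noncomputable def kdvSoliton (x : ℝ) : ℝ := 1 / 4 * (1 / cosh (x / 2)) ^ 2

@[fun_prop]
lemma continuous_kdvSoliton : Continuous kdvSoliton := by
  unfold kdvSoliton; fun_prop (disch := exact fun x ↦ (cosh_pos _).ne')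

lemma kdvSoliton_nonneg (x : ℝ) : 0 ≤ kdvSoliton x := by
  unfold kdvSoliton; positivity

lemma one_div_cosh_le_two_mul_exp_neg (x : ℝ) : 1 / cosh x ≤ 2 * exp (-x) := by
  have h : exp (-x) * exp x = 1 := by rw [← exp_add, neg_add_cancel, exp_zero]
  rw [div_le_iff₀ (cosh_pos x), cosh_eq]
  nlinarith [sq_nonneg (exp (-x))]

lemma kdvSoliton_le_exp_neg (x : ℝ) : kdvSoliton x ≤ exp (-x) := by
  have h := pow_le_pow_left₀ (by positivity) (one_div_cosh_le_two_mul_exp_neg (x / 2)) 2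
  calc kdvSoliton x ≤ 1 / 4 * (2 * exp (-(x / 2))) ^ 2 := by unfold kdvSoliton; gcongr
    _ = exp (-x) := by rw [mul_pow, ← exp_nat_mul]; ring_nf

lemma lintegral_Ioi_exp_neg_mul {c : ℝ} (hc : 0 < c) :
    ∫⁻ s in Ioi (0 : ℝ), ENNReal.ofReal (exp (-c * s)) = ENNReal.ofReal c⁻¹ := by
  rw [← ofReal_integral_eq_lintegral_ofReal (integrableOn_exp_mul_Ioi (by linarith) 0)
    (.of_forall fun _ ↦ (exp_pos _).le), integral_exp_mul_Ioi (by linarith)]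
  simp

lemma lintegral_ofReal_mul_abs_le_add {α : Type*} [MeasurableSpace α] {μ : Measure α}
    {w f g : α → ℝ} (hw : ∀ x, 0 ≤ w x) (hwm : AEMeasurable w μ) (hgm : AEMeasurable g μ) :
    ∫⁻ x, ENNReal.ofReal (w x * |f x|) ∂μ ≤
      ∫⁻ x, ENNReal.ofReal (w x * |f x - g x|) ∂μ + ∫⁻ x, ENNReal.ofReal (w x * |g x|) ∂μ := by
  rw [← lintegral_add_right' _ (by fun_prop)]
  refine lintegral_mono fun x ↦ ?_
  rw [← ENNReal.ofReal_add (mul_nonneg (hw x) (abs_nonneg _)) (mul_nonneg (hw x) (abs_nonneg _)),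
    ← mul_add]
  gcongr
  · exact hw x
  · simpa using abs_add_le (f x - g x) (g x)

lemma lintegral_ofReal_mul_le_sqrt_mul {α : Type*} [MeasurableSpace α] {μ : Measure α}
    {f g : α → ℝ} {A B : ℝ} (hf : AEMeasurable f μ) (hg : AEMeasurable g μ)
    (hf0 : ∀ x, 0 ≤ f x) (hA0 : 0 ≤ A) (hB0 : 0 ≤ B)
    (hA : ∫⁻ x, ENNReal.ofReal (f x ^ 2) ∂μ ≤ ENNReal.ofReal A)
    (hB : ∫⁻ x, ENNReal.ofReal (g x ^ 2) ∂μ ≤ ENNReal.ofReal B) :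
    ∫⁻ x, ENNReal.ofReal (f x * g x) ∂μ ≤ ENNReal.ofReal (√A * √B) := by
  have hsq (h : α → ℝ) (x : α) : ENNReal.ofReal (h x) ^ (2 : ℝ) ≤ ENNReal.ofReal (h x ^ 2) := by
    rw [ENNReal.rpow_two, ← sq_abs, ENNReal.ofReal_pow (abs_nonneg _)]
    gcongr
    exact le_abs_self _
  have hsqrt {C : ℝ} (hC : 0 ≤ C) : ENNReal.ofReal C ^ (1 / 2 : ℝ) = ENNReal.ofReal √C := by
    rw [ENNReal.ofReal_rpow_of_nonneg hC (by norm_num), sqrt_eq_rpow]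
  calc ∫⁻ x, ENNReal.ofReal (f x * g x) ∂μ
      = ∫⁻ x, ((fun x ↦ ENNReal.ofReal (f x)) * fun x ↦ ENNReal.ofReal (g x)) x ∂μ := by
        simp only [Pi.mul_apply, ENNReal.ofReal_mul (hf0 _)]
    _ ≤ (∫⁻ x, ENNReal.ofReal (f x) ^ (2 : ℝ) ∂μ) ^ (1 / 2 : ℝ) *
          (∫⁻ x, ENNReal.ofReal (g x) ^ (2 : ℝ) ∂μ) ^ (1 / 2 : ℝ) :=
        ENNReal.lintegral_mul_le_Lp_mul_Lq μ .two_two hf.ennreal_ofReal hg.ennreal_ofReal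
    _ ≤ ENNReal.ofReal A ^ (1 / 2 : ℝ) * ENNReal.ofReal B ^ (1 / 2 : ℝ) := by
        gcongr
        · exact (lintegral_mono (hsq f)).trans hA
        · exact (lintegral_mono (hsq g)).trans hB
    _ = ENNReal.ofReal (√A * √B) := by
        rw [hsqrt hA0, hsqrt hB0, ENNReal.ofReal_mul (sqrt_nonneg A)]

lemma lintegral_Ioi_exp_mul_abs_le {c q B : ℝ} {g : ℝ → ℝ} (hqc : q < c) (hg : Measurable g)
    (hB0 : 0 ≤ B)
    (hB : ∫⁻ s in Ioi (0 : ℝ), ENNReal.ofReal (exp (2 * c * s) * |g s| ^ 2) ≤ ENNReal.ofReal B) :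
    ∫⁻ s in Ioi (0 : ℝ), ENNReal.ofReal (exp (q * s) * |g s|) ≤
      ENNReal.ofReal √(B / (2 * (c - q))) := by
  have hsplit (s : ℝ) : exp (q * s) * |g s| = exp ((q - c) * s) * (exp (c * s) * |g s|) := by
    rw [← mul_assoc, ← exp_add]; ring_nf
  have hdecay (s : ℝ) : exp ((q - c) * s) ^ 2 = exp (-(2 * (c - q)) * s) := by
    rw [← exp_nat_mul]; ring_nf
  have hweight (s : ℝ) : (exp (c * s) * |g s|) ^ 2 = exp (2 * c * s) * |g s| ^ 2 := by
    rw [mul_pow, ← exp_nat_mul]; ring_nf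
  rw [div_eq_inv_mul, sqrt_mul (inv_nonneg.2 (by linarith))]
  simp only [hsplit]
  refine lintegral_ofReal_mul_le_sqrt_mul (by fun_prop) (by fun_prop) (fun _ ↦ (exp_pos _).le)
    (by simp only [inv_nonneg]; linarith) hB0 ?_ (by simpa only [hweight] using hB)
  simp only [hdecay, lintegral_Ioi_exp_neg_mul (by linarith : 0 < 2 * (c - q)), le_refl]

lemma lintegral_Ioi_exp_mul_kdvSoliton_le {q ε : ℝ} (hqε : q < ε) :
    ∫⁻ s in Ioi (0 : ℝ), ENNReal.ofReal (exp (q * s) * |ε ^ 2 * kdvSoliton (ε * s)|) ≤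
      ENNReal.ofReal (ε ^ 2 / (ε - q)) := by
  have hpointwise (s : ℝ) :
      exp (q * s) * |ε ^ 2 * kdvSoliton (ε * s)| ≤ ε ^ 2 * exp (-(ε - q) * s) :=
    calc exp (q * s) * |ε ^ 2 * kdvSoliton (ε * s)|
        = ε ^ 2 * (exp (q * s) * kdvSoliton (ε * s)) := by
          rw [abs_of_nonneg (mul_nonneg (sq_nonneg ε) (kdvSoliton_nonneg _))]; ring
      _ ≤ ε ^ 2 * (exp (q * s) * exp (-(ε * s))) := by gcongr; exact kdvSoliton_le_exp_neg _
      _ = ε ^ 2 * exp (-(ε - q) * s) := by rw [← exp_add]; ring_nf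
  calc ∫⁻ s in Ioi (0 : ℝ), ENNReal.ofReal (exp (q * s) * |ε ^ 2 * kdvSoliton (ε * s)|)
      ≤ ∫⁻ s in Ioi (0 : ℝ), ENNReal.ofReal (ε ^ 2) * ENNReal.ofReal (exp (-(ε - q) * s)) :=
        lintegral_mono fun s ↦ by
          rw [← ENNReal.ofReal_mul (sq_nonneg ε)]; exact ENNReal.ofReal_le_ofReal (hpointwise s)
    _ = ENNReal.ofReal (ε ^ 2 / (ε - q)) := by
        rw [div_eq_mul_inv, lintegral_const_mul' _ _ ENNReal.ofReal_ne_top,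
          lintegral_Ioi_exp_neg_mul (sub_pos.2 hqε), ENNReal.ofReal_mul (sq_nonneg ε)]

lemma sqrt_sq_mul_pow_seven_div_le {a ε M d : ℝ} (ha : 0 < a) (hε : 0 < ε) (hM : 0 ≤ M)
    (hd : a * ε ≤ d) : √(M ^ 2 * ε ^ 7 / d) ≤ M / √a * ε ^ 3 :=
  calc √(M ^ 2 * ε ^ 7 / d) ≤ √(M ^ 2 * ε ^ 7 / (a * ε)) := by gcongr
    _ = M / √a * ε ^ 3 := by
        rw [← sqrt_sq (by positivity : 0 ≤ M / √a * ε ^ 3), mul_pow, div_pow, sq_sqrt ha.le]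
        congr 1
        field_simp

theorem weighted_L1_bound_solitary_wave_general (a ε q M : ℝ) (ς : ℝ → ℝ)
    (ha : 0 < a) (hε0 : 0 < ε)
    (hq : q ≤ min (ε / 2) (a * ε / 2)) (hM : 0 ≤ M)
    (hmeas : Measurable ς)
    (hς : ∫⁻ s in Set.Ioi (0 : ℝ), ENNReal.ofReal
        (Real.exp (2 * a * ε * s) *
          |ς s - ε ^ 2 * (1 / 4 * (1 / Real.cosh (ε * s / 2)) ^ 2)| ^ 2)
      ≤ ENNReal.ofReal (M ^ 2 * ε ^ 7)) :
    ∫⁻ s in Set.Ioi (0 : ℝ), ENNReal.ofReal (Real.exp (q * s) * |ς s|)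
      ≤ ENNReal.ofReal (2 * ε + M / Real.sqrt a * ε ^ 3) := by
  have hqε : q ≤ ε / 2 := hq.trans (min_le_left _ _)
  have hqaε : q ≤ a * ε / 2 := hq.trans (min_le_right _ _)
  have haε : 0 < a * ε := mul_pos ha hε0
  have hremainder := lintegral_Ioi_exp_mul_abs_le (c := a * ε) (q := q) (B := M ^ 2 * ε ^ 7)
    (g := fun s ↦ ς s - ε ^ 2 * kdvSoliton (ε * s)) (by linarith)
    (hmeas.sub (by fun_prop)) (by positivity) (by simpa only [kdvSoliton, mul_assoc] using hς)
  have hsoliton := lintegral_Ioi_exp_mul_kdvSoliton_le (q := q) (ε := ε) (by linarith)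
  calc _ ≤ _ + _ := lintegral_ofReal_mul_abs_le_add (g := fun s ↦ ε ^ 2 * kdvSoliton (ε * s))
        (fun _ ↦ (exp_pos _).le) (by fun_prop) (by fun_prop)
    _ ≤ ENNReal.ofReal (M / √a * ε ^ 3) + ENNReal.ofReal (2 * ε) := by
        gcongr
        · exact hremainder.trans (ENNReal.ofReal_le_ofReal
            (sqrt_sq_mul_pow_seven_div_le ha hε0 hM (by linarith)))
        · refine hsoliton.trans (ENNReal.ofReal_le_ofReal ?_)
          rw [div_le_iff₀ (by linarith)]
          nlinarith
    _ = ENNReal.ofReal (2 * ε + M / √a * ε ^ 3) := by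
        rw [← ENNReal.ofReal_add (by positivity) (by positivity), add_comm]

/-- One-sided weighted `L¹` bound for the solitary wave: if
`∫₀^∞ e^{2aεs}|ς(s) - ε²σ(εs)|² ds ≤ M²ε⁷` with `σ(x) = (1/4)sech²(x/2)`,
then `∫₀^∞ e^{qs}|ς(s)| ds ≤ 2ε + (M/√a)ε³` for `0 < q ≤ min(ε/2, aε/2)`. -/
theorem weighted_L1_bound_solitary_wave (a ε q M : ℝ) (ς : ℝ → ℝ)
    (ha : 0 < a) (hε0 : 0 < ε) (hε1 : ε ≤ 1)
    (hq0 : 0 < q) (hq : q ≤ min (ε / 2) (a * ε / 2)) (hM : 0 ≤ M)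
    (hmeas : Measurable ς)
    (hς : ∫⁻ s in Set.Ioi (0 : ℝ), ENNReal.ofReal
        (Real.exp (2 * a * ε * s) *
          |ς s - ε ^ 2 * (1 / 4 * (1 / Real.cosh (ε * s / 2)) ^ 2)| ^ 2)
      ≤ ENNReal.ofReal (M ^ 2 * ε ^ 7)) :
    ∫⁻ s in Set.Ioi (0 : ℝ), ENNReal.ofReal (Real.exp (q * s) * |ς s|)
      ≤ ENNReal.ofReal (2 * ε + M / Real.sqrt a * ε ^ 3) :=
  weighted_L1_bound_solitary_wave_general a ε q M ς ha hε0 hq hM hmeas hς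
end
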